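/- arXiv:2210.12180 — 10 statements merged into one kernel-verified Lean document; each statement's English description precedes it below -/
import Mathlib

section
/- Let n be a 2-step nilpotent Lie algebra with inner product and let F : n → n be a skew-symmetric linear map with associated 2-form ω(X,Y) = ⟨F X, Y⟩. Then ω is closed (i.e. ⟨F U,[V,W]⟩ + ⟨F V,[W,U]⟩ + ⟨F W,[U,V]⟩ = 0 for all U,V,W ∈ n) if and only if (C1) the z-component of F(Z) lies in the orthogonal complement of [n,n] for every Z ∈ z, and (C2) ⟨F_z U,[V,W]⟩ + ⟨F_z V,[W,U]⟩ + ⟨F_z W,[U,V]⟩ = 0 for all U,V,W ∈ v, where F_z denotes the orthogonal projection of F onto z. -/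
open RealInnerProductSpace

/-!
Since `[n, n] ⊆ z`, only the `z`-component of `F` is seen by the cyclic sum. Since `z` is central,
changing `U` by an element `Z ∈ z` changes the sum only through the term `⟪F_z Z, [V, W]⟫`, which is
what (C1) controls; writing each argument as an element of `z` plus one of `v = zᗮ` then reduces
closedness to (C2).
-/

section

variable {n : Type*} [NormedAddCommGroup n] [InnerProductSpace ℝ n]
  (B : n →ₗ[ℝ] n →ₗ[ℝ] n) {z : Submodule ℝ n}

/-- For skew-symmetric `G` this is `dω(U, V, W)` up to sign, where `ω(X, Y) = ⟪G X, Y⟫`. -/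
def cyclicSum (G : n → n) (U V W : n) : ℝ :=
  ⟪G U, B V W⟫ + ⟪G V, B W U⟫ + ⟪G W, B U V⟫

theorem inner_span_range_eq_zero_iff (x : n) :
    (∀ C ∈ Submodule.span ℝ (Set.range fun p : n × n => B p.1 p.2), ⟪x, C⟫ = 0) ↔
      ∀ X Y, ⟪x, B X Y⟫ = 0 := by
  refine ⟨fun h X Y => h _ (Submodule.subset_span ⟨(X, Y), rfl⟩), fun h C hC => ?_⟩
  have hle : Submodule.span ℝ (Set.range fun p : n × n => B p.1 p.2) ≤ (ℝ ∙ x)ᗮ := by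
    rw [Submodule.span_le]
    rintro _ ⟨⟨X, Y⟩, rfl⟩
    exact Submodule.mem_orthogonal_singleton_iff_inner_right.2 (h X Y)
  exact Submodule.mem_orthogonal_singleton_iff_inner_right.1 (hle hC)

theorem inner_orthogonalProjectionOnto_of_mem_right [z.HasOrthogonalProjection] (x : n)
    {C : n} (hC : C ∈ z) : ⟪(z.orthogonalProjectionOnto x : n), C⟫ = ⟪x, C⟫ := by
  exact (Submodule.coe_inner _ _ _).symm.trans (z.inner_orthogonalProjectionOnto_eq_of_mem_right ⟨C, hC⟩ x)

theorem cyclicSum_orthogonalProjectionOnto [z.HasOrthogonalProjection]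
    (hderived : ∀ X Y, B X Y ∈ z) (G : n → n) (U V W : n) :
    cyclicSum B (fun X => (z.orthogonalProjectionOnto (G X) : n)) U V W = cyclicSum B G U V W := by
  simp only [cyclicSum, inner_orthogonalProjectionOnto_of_mem_right _ (hderived _ _)]

variable {B}

section Center

variable (hanti : ∀ X Y, B X Y = -B Y X) (hcenter : ∀ X ∈ z, ∀ Y, B X Y = 0)
include hanti hcenter

theorem apply_right_eq_zero_of_mem {Y : n} (hY : Y ∈ z) (X : n) : B X Y = 0 := by
  rw [hanti, hcenter Y hY, neg_zero]

theorem apply_eq_apply_of_sub_mem {X X' Y Y' : n} (hX : X - X' ∈ z) (hY : Y - Y' ∈ z) :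
    B X Y = B X' Y' := by
  have hleft : B (X - X') Y = 0 := hcenter _ hX Y
  have hright : B X' (Y - Y') = 0 := apply_right_eq_zero_of_mem hanti hcenter hY X'
  rw [map_sub, LinearMap.sub_apply, sub_eq_zero] at hleft
  rw [map_sub, sub_eq_zero] at hright
  rw [hleft, hright]

theorem cyclicSum_of_mem_left (G : n → n) {Z : n} (hZ : Z ∈ z) (V W : n) :
    cyclicSum B G Z V W = ⟪G Z, B V W⟫ := by
  simp only [cyclicSum, hcenter Z hZ, apply_right_eq_zero_of_mem hanti hcenter hZ,
    inner_zero_right, add_zero]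

theorem cyclicSum_eq_of_sub_mem (G : n →ₗ[ℝ] n) (hG : ∀ Z ∈ z, ∀ X Y, ⟪G Z, B X Y⟫ = 0)
    {U U' V V' W W' : n} (hU : U - U' ∈ z) (hV : V - V' ∈ z) (hW : W - W' ∈ z) :
    cyclicSum B G U V W = cyclicSum B G U' V' W' := by
  have hterm : ∀ {X X' Y Y' T T' : n}, X - X' ∈ z → Y - Y' ∈ z → T - T' ∈ z →
      ⟪G X, B Y T⟫ = ⟪G X', B Y' T'⟫ := by
    intro X X' Y Y' T T' hX hY hT
    rw [apply_eq_apply_of_sub_mem hanti hcenter hY hT, ← sub_eq_zero, ← inner_sub_left,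
      ← map_sub]
    exact hG _ hX _ _
  simp only [cyclicSum, hterm hU hV hW, hterm hV hW hU, hterm hW hU hV]

theorem cyclicSum_eq_zero_iff [z.HasOrthogonalProjection] (G : n →ₗ[ℝ] n) :
    (∀ U V W, cyclicSum B G U V W = 0) ↔
      (∀ Z ∈ z, ∀ X Y, ⟪G Z, B X Y⟫ = 0) ∧
        ∀ U ∈ zᗮ, ∀ V ∈ zᗮ, ∀ W ∈ zᗮ, cyclicSum B G U V W = 0 := by
  refine ⟨fun h => ⟨fun Z hZ X Y => ?_, fun U _ V _ W _ => h U V W⟩, ?_⟩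
  · rw [← cyclicSum_of_mem_left hanti hcenter G hZ]
    exact h Z X Y
  rintro ⟨hG, hperp⟩ U V W
  obtain ⟨U₀, hU₀, U', hU', rfl⟩ := z.exists_add_mem_mem_orthogonal U
  obtain ⟨V₀, hV₀, V', hV', rfl⟩ := z.exists_add_mem_mem_orthogonal V
  obtain ⟨W₀, hW₀, W', hW', rfl⟩ := z.exists_add_mem_mem_orthogonal W
  rw [cyclicSum_eq_of_sub_mem hanti hcenter G hG (U' := U') (V' := V') (W' := W')
    (by simpa using hU₀) (by simpa using hV₀) (by simpa using hW₀)]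
  exact hperp U' hU' V' hV' W' hW'

end Center

end

theorem stmt_3_general {n : Type*} [NormedAddCommGroup n] [InnerProductSpace ℝ n]
    [FiniteDimensional ℝ n]
    (B : n →ₗ[ℝ] n →ₗ[ℝ] n)
    (hanti : ∀ X Y, B X Y = - B Y X)
    (h2step : ∀ X Y W, B (B X Y) W = 0)
    (z : Submodule ℝ n) (hz : ∀ X, X ∈ z ↔ ∀ Y, B X Y = 0)
    (F : n →ₗ[ℝ] n) :
    (∀ U V W : n, ⟪F U, B V W⟫ + ⟪F V, B W U⟫ + ⟪F W, B U V⟫ = 0) ↔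
    ((∀ Z ∈ z, ∀ C ∈ Submodule.span ℝ (Set.range fun p : n × n => B p.1 p.2),
        ⟪(z.orthogonalProjectionOnto (F Z) : n), C⟫ = 0) ∧
     (∀ U ∈ zᗮ, ∀ V ∈ zᗮ, ∀ W ∈ zᗮ,
        ⟪(z.orthogonalProjectionOnto (F U) : n), B V W⟫ +
        ⟪(z.orthogonalProjectionOnto (F V) : n), B W U⟫ +
        ⟪(z.orthogonalProjectionOnto (F W) : n), B U V⟫ = 0)) := by
  have hderived : ∀ X Y, B X Y ∈ z := fun X Y => (hz _).2 (h2step X Y)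
  have hcenter : ∀ X ∈ z, ∀ Y, B X Y = 0 := fun X hX => (hz X).1 hX
  have hclosed : (∀ U V W, cyclicSum B F U V W = 0) ↔
      ∀ U V W, cyclicSum B (z.starProjection.toLinearMap ∘ₗ F) U V W = 0 := by
    simp only [← cyclicSum_orthogonalProjectionOnto B hderived F]
    rfl
  simp only [inner_span_range_eq_zero_iff]
  exact hclosed.trans (cyclicSum_eq_zero_iff hanti hcenter _)

/-- For a skew-symmetric endomorphism `F` of a 2-step nilpotent
metric Lie algebra, the associated 2-form `ω(X,Y) = ⟪F X, Y⟫` is closed iff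
(C1) the `z`-component of `F Z` is orthogonal to `[n,n]` for every `Z ∈ z`, and
(C2) the cyclic condition holds for the `z`-component of `F` on `v = zᗮ`. -/
theorem stmt_3 {n : Type*} [NormedAddCommGroup n] [InnerProductSpace ℝ n]
    [FiniteDimensional ℝ n]
    (B : n →ₗ[ℝ] n →ₗ[ℝ] n)
    (hanti : ∀ X Y, B X Y = - B Y X)
    (h2step : ∀ X Y W, B (B X Y) W = 0)
    (z : Submodule ℝ n) (hz : ∀ X, X ∈ z ↔ ∀ Y, B X Y = 0)
    (F : n →ₗ[ℝ] n) (hF : ∀ X Y, ⟪F X, Y⟫ = - ⟪X, F Y⟫) :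
    (∀ U V W : n, ⟪F U, B V W⟫ + ⟪F V, B W U⟫ + ⟪F W, B U V⟫ = 0) ↔
    ((∀ Z ∈ z, ∀ C ∈ Submodule.span ℝ (Set.range fun p : n × n => B p.1 p.2),
        ⟪(z.orthogonalProjectionOnto (F Z) : n), C⟫ = 0) ∧
     (∀ U ∈ zᗮ, ∀ V ∈ zᗮ, ∀ W ∈ zᗮ,
        ⟪(z.orthogonalProjectionOnto (F U) : n), B V W⟫ +
        ⟪(z.orthogonalProjectionOnto (F V) : n), B W U⟫ +
        ⟪(z.orthogonalProjectionOnto (F W) : n), B U V⟫ = 0)) :=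
  stmt_3_general B hanti h2step z hz F
end

section
/- Let n be a non-singular 2-step nilpotent Lie algebra with center z and suppose dim n > 3·dim z. Then every closed 2-form ω on n satisfies ω(Z,U)=0 for all Z ∈ z and all U ∈ n. -/
/-- If `n` is a non-singular 2-step nilpotent Lie algebra with
center `z` and `dim n > 3 · dim z`, then every closed 2-form `ω` on `n`
satisfies `ω(Z,U) = 0` for all `Z ∈ z`, `U ∈ n`. -/
theorem stmt_5 {n : Type*} [AddCommGroup n] [Module ℝ n] [FiniteDimensional ℝ n]
    (B : n →ₗ[ℝ] n →ₗ[ℝ] n)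
    (hanti : ∀ X Y, B X Y = - B Y X)
    (h2step : ∀ X Y W, B (B X Y) W = 0)
    (z : Submodule ℝ n) (hz : ∀ X, X ∈ z ↔ ∀ Y, B X Y = 0)
    (hns : ∀ X, X ∉ z → ∀ Z ∈ z, ∃ Y, B X Y = Z)
    (hdim : 3 * Module.finrank ℝ z < Module.finrank ℝ n)
    (ω : n →ₗ[ℝ] n →ₗ[ℝ] ℝ)
    (hω : ∀ X Y, ω X Y = - ω Y X)
    (hclosed : ∀ U V W, ω U (B V W) + ω V (B W U) + ω W (B U V) = 0) :
    ∀ Z ∈ z, ∀ U, ω Z U = 0 := by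
  classical
  -- brackets are central
  have hbz : ∀ X Y, B X Y ∈ z := fun X Y => (hz _).2 (fun W => h2step X Y W)
  -- main step: for X ∉ z, ω X Z = 0 for all Z ∈ z
  have main : ∀ X, X ∉ z → ∀ Z ∈ z, ω X Z = 0 := by
    intro X hX
    set K : Submodule ℝ n := LinearMap.ker (B X) with hKdef
    have hzK : z ≤ K := by
      intro Z hZ
      have : B X Z = 0 := by
        rw [hanti, (hz Z).1 hZ X, neg_zero]
      exact this
    have hrange : LinearMap.range (B X) ≤ z := by
      rintro _ ⟨U, rfl⟩; exact hbz X U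
    set W : Submodule ℝ n :=
      Submodule.span ℝ {x | ∃ U ∈ K, ∃ V ∈ K, B U V = x} with hWdef
    have hWker : W ≤ LinearMap.ker (ω X) := by
      rw [Submodule.span_le]
      rintro _ ⟨U, hU, V, hV, rfl⟩
      have h := hclosed X U V
      have hXU : B X U = 0 := hU
      have hXV : B X V = 0 := hV
      have hVX : B V X = 0 := by rw [hanti, hXV, neg_zero]
      rw [hVX, hXU] at h
      simp only [map_zero, add_zero, zero_add] at h
      simpa using h
    have hzW : z ≤ W := by
      by_contra hcon
      have hex : ∃ x ∈ z, x ∉ W := by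
        by_contra h; push_neg at h; exact hcon h
      obtain ⟨Z₁, hZ₁z, hZ₁W⟩ := hex
      -- a functional vanishing on W but not on Z₁
      have hq : (W.mkQ Z₁ : n ⧸ W) ≠ 0 := by
        simpa [Submodule.Quotient.mk_eq_zero] using hZ₁W
      obtain ⟨f, hf⟩ : ∃ f : (n ⧸ W) →ₗ[ℝ] ℝ, f (W.mkQ Z₁) ≠ 0 := by
        by_contra h; push_neg at h
        exact hq ((Module.forall_dual_apply_eq_zero_iff ℝ _).1 h)
      set φ : n →ₗ[ℝ] ℝ := f.comp W.mkQ with hφdef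
      have hφW : ∀ w ∈ W, φ w = 0 := by
        intro w hw
        have : W.mkQ w = 0 := by simpa [Submodule.Quotient.mk_eq_zero] using hw
        simp [hφdef, this]
      have hφZ : φ Z₁ ≠ 0 := hf
      -- the skew bilinear form φ ∘ B, restricted in the first slot to K
      set χ : K →ₗ[ℝ] (n →ₗ[ℝ] ℝ) :=
        (LinearMap.llcomp ℝ n n ℝ φ).comp (B.comp K.subtype) with hχdef
      have hχapp : ∀ (v : K) (u : n), χ v u = φ (B v.1 u) := fun v u => rfl
      have hker : LinearMap.ker χ = z.comap K.subtype := by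
        ext v
        simp only [LinearMap.mem_ker, Submodule.mem_comap, Submodule.coe_subtype]
        constructor
        · intro hv
          by_contra hvz
          obtain ⟨Y, hY⟩ := hns v.1 hvz Z₁ hZ₁z
          have h0 : χ v Y = 0 := by rw [hv]; rfl
          rw [hχapp, hY] at h0
          exact hφZ h0
        · intro hv
          apply LinearMap.ext
          intro u
          rw [hχapp, (hz v.1).1 hv u, map_zero]
          rfl
      have hrangeχ : LinearMap.range χ ≤ K.dualAnnihilator := by
        rintro _ ⟨v, rfl⟩
        rw [Submodule.mem_dualAnnihilator]
        intro u hu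
        rw [hχapp]
        exact hφW _ (Submodule.subset_span ⟨v.1, v.2, u, hu, rfl⟩)
      -- dimension bookkeeping
      have e1 : Module.finrank ℝ (LinearMap.range (B X)) + Module.finrank ℝ K
          = Module.finrank ℝ n := LinearMap.finrank_range_add_finrank_ker (B X)
      have e2 : Module.finrank ℝ (LinearMap.range (B X)) ≤ Module.finrank ℝ z :=
        Submodule.finrank_mono hrange
      have e3 : Module.finrank ℝ (LinearMap.range χ) + Module.finrank ℝ (LinearMap.ker χ)
          = Module.finrank ℝ K := LinearMap.finrank_range_add_finrank_ker χ
      have e4 : Module.finrank ℝ (LinearMap.ker χ) = Module.finrank ℝ z := by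
        rw [hker]
        exact (Submodule.comapSubtypeEquivOfLe hzK).finrank_eq
      have e5 : Module.finrank ℝ (LinearMap.range χ) ≤ Module.finrank ℝ K.dualAnnihilator :=
        Submodule.finrank_mono hrangeχ
      have e6 : Module.finrank ℝ K.dualAnnihilator + Module.finrank ℝ K
          = Module.finrank ℝ n := by
        rw [← (Subspace.quotEquivAnnihilator K).finrank_eq]
        exact Submodule.finrank_quotient_add_finrank K
      omega
    intro Z hZ
    exact hWker (hzW hZ)
  -- there is a non-central element
  have hex : ∃ X, X ∉ z := by
    by_contra h; push_neg at h
    have hzt : z = ⊤ := eq_top_iff.2 fun x _ => h x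
    rw [hzt, finrank_top] at hdim
    omega
  obtain ⟨X₀, hX₀⟩ := hex
  -- ω vanishes on z × z
  have stepB : ∀ Z ∈ z, ∀ Z' ∈ z, ω Z Z' = 0 := by
    intro Z hZ Z' hZ'
    obtain ⟨Y, hY⟩ := hns X₀ hX₀ Z' hZ'
    have h := hclosed Z X₀ Y
    have h1 : B Y Z = 0 := by rw [hanti, (hz Z).1 hZ Y, neg_zero]
    have h2 : B Z X₀ = 0 := (hz Z).1 hZ X₀
    rw [hY, h1, h2] at h
    simpa using h
  intro Z hZ U
  by_cases hU : U ∈ z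
  · exact stepB Z hZ U hU
  · rw [hω, main U hU Z hZ, neg_zero]
end

section
/- Let ω be a closed 2-form on a 2-step nilpotent Lie algebra n whose kernel ker(ω) = {W : ω(W,V)=0 for all V} intersects the center z trivially. Then ker(ω) is an abelian subalgebra of n. -/
/-- If `ω` is a closed 2-form on a 2-step nilpotent Lie algebra
whose kernel intersects the center trivially, then `ker ω` is an abelian
subalgebra: any two elements of `ker ω` commute. -/
theorem stmt_6 {n : Type*} [AddCommGroup n] [Module ℝ n] [FiniteDimensional ℝ n]
    (B : n →ₗ[ℝ] n →ₗ[ℝ] n)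
    (hanti : ∀ X Y, B X Y = - B Y X)
    (h2step : ∀ X Y W, B (B X Y) W = 0)
    (z : Submodule ℝ n) (hz : ∀ X, X ∈ z ↔ ∀ Y, B X Y = 0)
    (ω : n →ₗ[ℝ] n →ₗ[ℝ] ℝ)
    (hω : ∀ X Y, ω X Y = - ω Y X)
    (hclosed : ∀ U V W, ω U (B V W) + ω V (B W U) + ω W (B U V) = 0)
    (hker : ∀ X ∈ z, (∀ V, ω X V = 0) → X = 0) :
    ∀ U V, (∀ X, ω U X = 0) → (∀ X, ω V X = 0) → B U V = 0 := by
  intro U V hU hV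
  apply hker _ ((hz _).2 (fun W => by
    have h := h2step U V W
    simp [h]))
  intro W
  have h := hclosed U V W
  rw [hU, hV] at h
  have hw : ω W (B U V) = 0 := by linarith
  rw [hω]; simp [hw]
end

section
/- Let A be the quaternions or the octonions, and let n = (A × A) ⊕ A be the H-type Lie algebra with bracket [(U,V),(Ũ,Ṽ)] = U·Ṽ − Ũ·V ∈ A (the center). Then the only abelian Lie subalgebras of v = A × A of dimension dim A are {0} × A and A × {0}. -/
open RealInnerProductSpace

set_option maxHeartbeats 1000000 in
/-- Let `A` be a noncommutative normed real division algebra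
(the quaternions or the octonions, by Hurwitz's theorem). In the H-type Lie
algebra `n = (A × A) ⊕ A` with bracket `[(U,V),(Ũ,Ṽ)] = U·Ṽ − Ũ·V`, the only
abelian subalgebras of `v = A × A` of dimension `dim A` are `{0} × A` and
`A × {0}`. -/
theorem stmt_8 {A : Type*} [NormedAddCommGroup A] [InnerProductSpace ℝ A]
    [FiniteDimensional ℝ A]
    (mul : A →ₗ[ℝ] A →ₗ[ℝ] A) (one : A)
    (honel : ∀ a, mul one a = a) (honer : ∀ a, mul a one = a)
    (hnorm : ∀ a b, ‖mul a b‖ = ‖a‖ * ‖b‖)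
    (hnoncomm : ∃ a b, mul a b ≠ mul b a)
    (w : Submodule ℝ (A × A))
    (habel : ∀ p ∈ w, ∀ q ∈ w, mul p.1 q.2 - mul q.1 p.2 = 0)
    (hdim : Module.finrank ℝ w = Module.finrank ℝ A) :
    w = Submodule.prod ⊥ ⊤ ∨ w = Submodule.prod ⊤ ⊥ := by
  classical
  -- no zero divisors
  have hzero : ∀ a b : A, mul a b = 0 → a = 0 ∨ b = 0 := by
    intro a b h
    have h2 : ‖a‖ * ‖b‖ = 0 := by rw [← hnorm, h, norm_zero]
    rcases mul_eq_zero.mp h2 with h3 | h3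
    · exact Or.inl (norm_eq_zero.mp h3)
    · exact Or.inr (norm_eq_zero.mp h3)
  -- polarization identity in the first variable
  have P1 : ∀ x y z : A, ⟪mul x z, mul y z⟫ = ⟪x, y⟫ * ‖z‖ ^ 2 := by
    intro x y z
    have h1 : mul (x + y) z = mul x z + mul y z := by
      simp [map_add]
    have h2 : ‖mul x z + mul y z‖ ^ 2 = ‖x + y‖ ^ 2 * ‖z‖ ^ 2 := by
      rw [← h1, ← mul_pow, ← hnorm]
    rw [norm_add_sq_real, norm_add_sq_real] at h2
    have hx2 : ‖mul x z‖ ^ 2 = ‖x‖ ^ 2 * ‖z‖ ^ 2 := by rw [hnorm]; ring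
    have hy2 : ‖mul y z‖ ^ 2 = ‖y‖ ^ 2 * ‖z‖ ^ 2 := by rw [hnorm]; ring
    linear_combination (h2 - hx2 - hy2) / 2
  -- exchange identity
  have EX : ∀ x y u v : A,
      ⟪mul x u, mul y v⟫ + ⟪mul y u, mul x v⟫ = 2 * ⟪x, y⟫ * ⟪u, v⟫ := by
    intro x y u v
    have h := P1 x y (u + v)
    have e1 : mul x (u + v) = mul x u + mul x v := map_add _ _ _
    have e2 : mul y (u + v) = mul y u + mul y v := map_add _ _ _
    rw [e1, e2, inner_add_left, inner_add_right, inner_add_right,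
      norm_add_sq_real] at h
    have h1 := P1 x y u
    have h2 := P1 x y v
    have hcomm := real_inner_comm (mul y u) (mul x v)
    linear_combination h - h1 - h2 - hcomm
  -- finrank of the two "axis" submodules
  have hfin1 : Module.finrank ℝ (Submodule.prod (⊥ : Submodule ℝ A) (⊤ : Submodule ℝ A)) =
      Module.finrank ℝ A := by
    have h1 : Submodule.prod (⊥ : Submodule ℝ A) (⊤ : Submodule ℝ A) =
        LinearMap.range (LinearMap.inr ℝ A A) := by
      rw [LinearMap.range_inr]
      ext p
      simp [Submodule.mem_prod, LinearMap.mem_ker]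
    rw [h1, LinearMap.finrank_range_of_inj LinearMap.inr_injective]
  have hfin2 : Module.finrank ℝ (Submodule.prod (⊤ : Submodule ℝ A) (⊥ : Submodule ℝ A)) =
      Module.finrank ℝ A := by
    have h1 : Submodule.prod (⊤ : Submodule ℝ A) (⊥ : Submodule ℝ A) =
        LinearMap.range (LinearMap.inl ℝ A A) := by
      rw [LinearMap.range_inl]
      ext p
      simp [Submodule.mem_prod, LinearMap.mem_ker]
    rw [h1, LinearMap.finrank_range_of_inj LinearMap.inl_injective]
  by_cases h2 : ∀ p ∈ w, p.2 = 0
  · right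
    have hle : w ≤ Submodule.prod (⊤ : Submodule ℝ A) (⊥ : Submodule ℝ A) := by
      intro p hp
      exact ⟨trivial, by simpa using h2 p hp⟩
    exact Submodule.eq_of_le_of_finrank_eq hle (hdim.trans hfin2.symm)
  by_cases h1 : ∀ p ∈ w, p.1 = 0
  · left
    have hle : w ≤ Submodule.prod (⊥ : Submodule ℝ A) (⊤ : Submodule ℝ A) := by
      intro p hp
      exact ⟨by simpa using h1 p hp, trivial⟩
    exact Submodule.eq_of_le_of_finrank_eq hle (hdim.trans hfin1.symm)
  exfalso
  push_neg at h1 h2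
  obtain ⟨q, hqw, hq1⟩ := h1
  obtain ⟨p, hpw, hp2⟩ := h2
  -- get r ∈ w with both components nonzero
  obtain ⟨r, hrw, hr1, hr2⟩ : ∃ r ∈ w, r.1 ≠ 0 ∧ r.2 ≠ 0 := by
    by_cases hp1 : p.1 ≠ 0
    · exact ⟨p, hpw, hp1, hp2⟩
    push_neg at hp1
    by_cases hq2 : q.2 + p.2 ≠ 0
    · exact ⟨q + p, w.add_mem hqw hpw, by simpa [hp1] using hq1, hq2⟩
    · push_neg at hq2
      refine ⟨q + (2 : ℝ) • p, w.add_mem hqw (w.smul_mem _ hpw), by simpa [hp1] using hq1, ?_⟩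
      have : (q + (2 : ℝ) • p).2 = (q.2 + p.2) + p.2 := by
        simp [Prod.snd_add, two_smul]
        abel
      rw [this, hq2, zero_add]
      exact hp2
  -- the first projection on w
  set φ : w →ₗ[ℝ] A := (LinearMap.fst ℝ A A).comp w.subtype with hφ
  have hφapp : ∀ s : w, φ s = (s : A × A).1 := fun s => rfl
  have hinj : Function.Injective φ := by
    rw [← LinearMap.ker_eq_bot]
    rw [LinearMap.ker_eq_bot']
    intro s hs
    have hs1 : (s : A × A).1 = 0 := hs
    have hb := habel r hrw s s.2
    rw [hs1] at hb
    simp only [map_zero, LinearMap.zero_apply, sub_zero] at hb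
    have : (s : A × A).2 = 0 := by
      rcases hzero _ _ hb with h | h
      · exact absurd h hr1
      · exact h
    ext
    · exact hs1
    · exact this
  have hsurj : Function.Surjective φ :=
    (LinearMap.injective_iff_surjective_of_finrank_eq_finrank hdim).mp hinj
  -- the element (one, c) in w
  obtain ⟨s₀, hs₀⟩ := hsurj one
  set c : A := (s₀ : A × A).2 with hc
  have hs₀1 : (s₀ : A × A).1 = one := hs₀
  -- every x gives (x, mul x c) ∈ w
  have hmem : ∀ x : A, ((x, mul x c) : A × A) ∈ w := by
    intro x
    obtain ⟨t, ht⟩ := hsurj x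
    have ht1 : (t : A × A).1 = x := ht
    have hb := habel (t : A × A) t.2 (s₀ : A × A) s₀.2
    rw [ht1, hs₀1, honel, ← hc, sub_eq_zero] at hb
    have : ((x, mul x c) : A × A) = (t : A × A) := by
      ext
      · exact ht1.symm
      · exact hb
    rw [this]
    exact t.2
  -- c ≠ 0
  have hc0 : c ≠ 0 := by
    intro h
    have hb := habel (s₀ : A × A) s₀.2 r hrw
    rw [hs₀1, honel, ← hc, h, sub_eq_zero] at hb
    simp only [map_zero] at hb
    exact hr2 hb
  -- the symmetry identity
  have Ksym : ∀ x y : A, mul x (mul y c) = mul y (mul x c) := by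
    intro x y
    have hb := habel ((x, mul x c) : A × A) (hmem x) ((y, mul y c) : A × A) (hmem y)
    simpa [sub_eq_zero] using hb
  -- one ≠ 0
  have honez : one ≠ 0 := by
    intro h
    obtain ⟨a, b, hab⟩ := hnoncomm
    apply hab
    have hall : ∀ x : A, x = 0 := fun x => by rw [← honel x, h]; simp
    rw [hall a, hall b]
  -- dim A ≥ 3 from noncommutativity
  have hdim3 : 3 ≤ Module.finrank ℝ A := by
    by_contra hlt
    push_neg at hlt
    obtain ⟨a, b, hab⟩ := hnoncomm
    apply hab
    have hdep : ¬ LinearIndependent ℝ ![one, a, b] := by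
      intro hli
      have := hli.fintype_card_le_finrank
      simp at this
      omega
    rw [Fintype.not_linearIndependent_iff] at hdep
    obtain ⟨g, hg, i, hgi⟩ := hdep
    rw [Fin.sum_univ_three] at hg
    simp only [Matrix.cons_val_zero, Matrix.cons_val_one, Matrix.head_cons,
      Matrix.cons_val_two, Matrix.tail_cons] at hg
    by_cases hg2 : g 2 ≠ 0
    · -- b is a combination of one and a
      have hb : g 2 • b = (-g 0) • one + (-g 1) • a := by
        rw [neg_smul, neg_smul, ← sub_eq_zero]
        rw [← hg]; abel
      have key : mul a (g 2 • b) = mul (g 2 • b) a := by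
        rw [hb]
        simp only [map_add, map_smul, LinearMap.add_apply, LinearMap.smul_apply,
          honel, honer, map_neg, LinearMap.neg_apply]
      have key2 : g 2 • mul a b = g 2 • mul b a := by
        simpa only [map_smul, LinearMap.smul_apply] using key
      exact smul_right_injective A hg2 key2
    · push_neg at hg2
      by_cases hg1 : g 1 ≠ 0
      · have ha : g 1 • a = (-g 0) • one := by
          rw [hg2, zero_smul, add_zero] at hg
          rw [neg_smul, ← sub_eq_zero, ← hg]; abel
        have key : mul (g 1 • a) b = mul b (g 1 • a) := by
          rw [ha]
          simp only [map_smul, LinearMap.smul_apply, honel, honer, map_neg,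
            LinearMap.neg_apply]
        have key2 : g 1 • mul a b = g 1 • mul b a := by
          simpa only [map_smul, LinearMap.smul_apply] using key
        exact smul_right_injective A hg1 key2
      · push_neg at hg1
        exfalso
        rw [hg1, hg2, zero_smul, zero_smul, add_zero, add_zero, smul_eq_zero] at hg
        rcases hg with h | h
        · fin_cases i <;> simp_all
        · exact honez h
  -- key orthogonality lemma
  have horth : ∀ a b : A, ‖a‖ = 1 → ‖b‖ = 1 → ⟪a, b⟫ = 0 →
      mul a (mul a c) + mul b (mul b c) = 0 := by
    intro a b ha hb hab
    have hEX := EX a b (mul a c) (mul b c)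
    rw [hab] at hEX
    have hsymm : mul b (mul a c) = mul a (mul b c) := Ksym b a
    have hterm : ⟪mul b (mul a c), mul a (mul b c)⟫ = ‖c‖ ^ 2 := by
      rw [hsymm, real_inner_self_eq_norm_sq, hnorm, hnorm, ha, hb]; ring
    have h1 : ⟪mul a (mul a c), mul b (mul b c)⟫ = -‖c‖ ^ 2 := by
      linarith [hEX, hterm]
    have hnz : ‖mul a (mul a c) + mul b (mul b c)‖ ^ 2 = 0 := by
      rw [norm_add_sq_real, h1, hnorm, hnorm, hnorm, hnorm, ha, hb]; ring
    have := pow_eq_zero_iff (n := 2) (by norm_num) |>.mp hnz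
    exact norm_eq_zero.mp this
  -- pick three orthonormal vectors
  set n := Module.finrank ℝ A with hn
  have h0 : 0 < n := by omega
  have h1' : 1 < n := by omega
  have h2' : 2 < n := by omega
  set B := stdOrthonormalBasis ℝ A with hB
  have hON := B.orthonormal
  set ea := B ⟨0, h0⟩ with hea
  set eb := B ⟨1, h1'⟩ with heb
  set ed := B ⟨2, h2'⟩ with hed
  have hne01 : (⟨0, h0⟩ : Fin n) ≠ ⟨1, h1'⟩ := by simp [Fin.ext_iff]
  have hne02 : (⟨0, h0⟩ : Fin n) ≠ ⟨2, h2'⟩ := by simp [Fin.ext_iff]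
  have hne12 : (⟨1, h1'⟩ : Fin n) ≠ ⟨2, h2'⟩ := by simp [Fin.ext_iff]
  have hna : ‖ea‖ = 1 := hON.1 _
  have hnb : ‖eb‖ = 1 := hON.1 _
  have hnd : ‖ed‖ = 1 := hON.1 _
  have hab : ⟪ea, eb⟫ = 0 := hON.2 hne01
  have had : ⟪ea, ed⟫ = 0 := hON.2 hne02
  have hbd : ⟪eb, ed⟫ = 0 := hON.2 hne12
  have hXY := horth ea eb hna hnb hab
  have hXZ := horth ea ed hna hnd had
  have hYZ := horth eb ed hnb hnd hbd
  set X := mul ea (mul ea c)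
  set Y := mul eb (mul eb c)
  set Z := mul ed (mul ed c)
  have hXY' : X = -Y := eq_neg_of_add_eq_zero_left hXY
  have hXZ' : X = -Z := eq_neg_of_add_eq_zero_left hXZ
  have hYZ2 : Y = Z := by
    have : -Y = -Z := hXY' ▸ hXZ'
    exact neg_injective this
  have hYY : Y + Y = 0 := by
    nth_rewrite 2 [hYZ2]
    exact hYZ
  have h2Y : (2 : ℝ) • Y = 0 := by rw [two_smul]; exact hYY
  have hY0 : Y = 0 := by
    rcases smul_eq_zero.mp h2Y with h | h
    · norm_num at h
    · exact h
  have hYn : ‖Y‖ = ‖c‖ := by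
    show ‖mul eb (mul eb c)‖ = ‖c‖
    rw [hnorm, hnorm, hnb]; ring
  rw [hY0, norm_zero] at hYn
  exact hc0 (norm_eq_zero.mp hYn.symm)
end

section
/- Let n = v ⊕ z be a 2-step nilpotent Lie algebra with inner product, z̃ ⊆ z a subspace with orthogonal projection π : z → z̃, and ñ = v ⊕ z̃ the Lie algebra with bracket [V+Z, V'+Z']_ñ = π([V,V']_n). If n is of H-type (respectively non-singular), then ñ is of H-type (respectively non-singular). -/
open RealInnerProductSpace

/- For `Z ∈ z̃`, projecting the bracket onto `z̃` does not change `⟪Z, [X, Y]⟫`, so the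
operator `j̃_Z` of `ñ` coincides with `j_Z`; both properties are statements about these
operators for central `Z`, hence pass from `z` to its subspace `z̃`. -/

theorem LinearMap.eq_of_inner_orthogonalProjectionOnto {E : Type*} [NormedAddCommGroup E]
    [InnerProductSpace ℝ E] (K : Submodule ℝ E) [K.HasOrthogonalProjection]
    (b : E → E → E) {f g : E →ₗ[ℝ] E} {Z : E} (hZ : Z ∈ K)
    (hf : ∀ X Y, ⟪f X, Y⟫ = ⟪Z, b X Y⟫)
    (hg : ∀ X Y, ⟪g X, Y⟫ = ⟪Z, (K.orthogonalProjectionOnto (b X Y) : E)⟫) :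
    g = f := by
  ext X
  refine ext_inner_right ℝ fun Y => ?_
  rw [hg, hf]
  exact K.inner_orthogonalProjectionOnto_eq_of_mem_left ⟨Z, hZ⟩ (b X Y)

theorem stmt_11_general {n : Type*} [NormedAddCommGroup n] [InnerProductSpace ℝ n]
    [FiniteDimensional ℝ n]
    (B : n →ₗ[ℝ] n →ₗ[ℝ] n)
    (z : Submodule ℝ n)
    (zt : Submodule ℝ n) (hzt : zt ≤ z)
    (j : n → n →ₗ[ℝ] n)
    (hj : ∀ Z ∈ z, ∀ X Y : n, ⟪j Z X, Y⟫ = ⟪Z, B X Y⟫)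
    (jt : n → n →ₗ[ℝ] n)
    (hjt : ∀ Z ∈ zt, ∀ X Y : n,
      ⟪jt Z X, Y⟫ = ⟪Z, (Submodule.orthogonalProjectionOnto zt (B X Y) : n)⟫) :
    ((∀ Z ∈ z, ∀ V ∈ zᗮ, j Z (j Z V) = - (‖Z‖ ^ 2 • V)) →
      ∀ Z ∈ zt, ∀ V ∈ zᗮ, jt Z (jt Z V) = - (‖Z‖ ^ 2 • V)) ∧
    ((∀ Z ∈ z, Z ≠ 0 →
        (∀ V ∈ zᗮ, j Z V = 0 → V = 0) ∧ (∀ W ∈ zᗮ, ∃ V ∈ zᗮ, j Z V = W)) →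
      ∀ Z ∈ zt, Z ≠ 0 →
        (∀ V ∈ zᗮ, jt Z V = 0 → V = 0) ∧ (∀ W ∈ zᗮ, ∃ V ∈ zᗮ, jt Z V = W)) := by
  have jt_eq_j : ∀ Z ∈ zt, jt Z = j Z := fun Z hZ =>
    LinearMap.eq_of_inner_orthogonalProjectionOnto zt (fun X Y => B X Y) hZ
      (hj Z (hzt hZ)) (hjt Z hZ)
  refine ⟨fun hHtype Z hZ => ?_, fun hnonsing Z hZ => ?_⟩
  · rw [jt_eq_j Z hZ]
    exact hHtype Z (hzt hZ)
  · rw [jt_eq_j Z hZ]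
    exact hnonsing Z (hzt hZ)

/-- Let `n = v ⊕ z` be 2-step nilpotent, `z̃ ⊆ z` a subspace with
orthogonal projection `π`, and `ñ = v ⊕ z̃` the Lie algebra with projected
bracket. If `n` is of H-type (resp. non-singular) then so is `ñ`. -/
theorem stmt_11 {n : Type*} [NormedAddCommGroup n] [InnerProductSpace ℝ n]
    [FiniteDimensional ℝ n]
    (B : n →ₗ[ℝ] n →ₗ[ℝ] n)
    (hanti : ∀ X Y, B X Y = - B Y X)
    (h2step : ∀ X Y W, B (B X Y) W = 0)
    (z : Submodule ℝ n) (hz : ∀ X, X ∈ z ↔ ∀ Y, B X Y = 0)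
    (zt : Submodule ℝ n) (hzt : zt ≤ z)
    (j : n → n →ₗ[ℝ] n)
    (hj : ∀ Z ∈ z, ∀ X Y : n, ⟪j Z X, Y⟫ = ⟪Z, B X Y⟫)
    (jt : n → n →ₗ[ℝ] n)
    (hjt : ∀ Z ∈ zt, ∀ X Y : n,
      ⟪jt Z X, Y⟫ = ⟪Z, (Submodule.orthogonalProjectionOnto zt (B X Y) : n)⟫) :
    ((∀ Z ∈ z, ∀ V ∈ zᗮ, j Z (j Z V) = - (‖Z‖ ^ 2 • V)) →
      ∀ Z ∈ zt, ∀ V ∈ zᗮ, jt Z (jt Z V) = - (‖Z‖ ^ 2 • V)) ∧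
    ((∀ Z ∈ z, Z ≠ 0 →
        (∀ V ∈ zᗮ, j Z V = 0 → V = 0) ∧ (∀ W ∈ zᗮ, ∃ V ∈ zᗮ, j Z V = W)) →
      ∀ Z ∈ zt, Z ≠ 0 →
        (∀ V ∈ zᗮ, jt Z V = 0 → V = 0) ∧ (∀ W ∈ zᗮ, ∃ V ∈ zᗮ, jt Z V = W)) :=
  stmt_11_general B z zt hzt j hj jt hjt
end

section
/- Let n = v ⊕ z be a non-singular 2-step nilpotent Lie algebra with inner product, z̃ ⊆ z a subspace with orthogonal projection π, and ñ = v ⊕ z̃ the Lie algebra with bracket [V,V']_ñ = π([V,V']_n). If F̃ : ñ → ñ is a skew-symmetric map satisfying the closedness condition (C2) on ñ, then F : n → n defined by F(V+Z) = F̃(V + π(Z)) is skew-symmetric and satisfies (C2) on n; moreover F restricted to v is nonzero whenever F̃ restricted to v is nonzero. -/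
open RealInnerProductSpace

/-!
A skew-symmetric `F̃` with values in `ñ = v ⊕ z̃` vanishes on `ñᗮ = z ⊖ z̃`, so `F = F̃`. Since brackets
lie in `z`, `⟪π_z (F̃ U), [V, W]⟫ = ⟪F̃ U, [V, W]⟫`, and as `F̃ U ∈ ñ` only the `z̃`-component of
`[V, W]` contributes; hence (C2) on `n` is literally (C2) on `ñ`.
-/

namespace Submodule

variable {E : Type*} [NormedAddCommGroup E] [InnerProductSpace ℝ E]

theorem sub_starProjection_add_mem_orthogonal_sup {L M : Submodule ℝ E} [L.HasOrthogonalProjection]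
    [Mᗮ.HasOrthogonalProjection] (hLM : L ≤ M) (x : E) :
    x - (Mᗮ.starProjection x + L.starProjection x) ∈ (Mᗮ ⊔ L)ᗮ := by
  rw [← inf_orthogonal]
  constructor
  · rw [← sub_sub]
    exact sub_mem (sub_starProjection_mem_orthogonal x)
      (M.le_orthogonal_orthogonal (hLM (starProjection_apply_mem L x)))
  · rw [add_comm, ← sub_sub]
    exact sub_mem (sub_starProjection_mem_orthogonal x)
      (orthogonal_le hLM (starProjection_apply_mem Mᗮ x))

theorem inner_starProjection_eq_inner_starProjection_of_mem_sup {L M : Submodule ℝ E}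
    [L.HasOrthogonalProjection] [M.HasOrthogonalProjection] [Mᗮ.HasOrthogonalProjection]
    (hLM : L ≤ M) {x c : E} (hx : x ∈ Mᗮ ⊔ L) (hc : c ∈ M) :
    ⟪M.starProjection x, c⟫ = ⟪x, L.starProjection c⟫ := by
  have hc' : Mᗮ.starProjection c = 0 :=
    (starProjection_apply_eq_zero_iff Mᗮ).mpr (M.le_orthogonal_orthogonal hc)
  have h := sub_starProjection_add_mem_orthogonal_sup hLM c
  rw [hc', zero_add] at h
  rw [inner_starProjection_left_eq_right, starProjection_eq_self_iff.mpr hc, ← sub_eq_zero,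
    ← inner_sub_right]
  exact inner_right_of_mem_orthogonal hx h

end Submodule

theorem LinearMap.apply_eq_of_sub_mem_orthogonal {E : Type*} [NormedAddCommGroup E]
    [InnerProductSpace ℝ E] {T : E →ₗ[ℝ] E} {K : Submodule ℝ E}
    (hT : ∀ x y, ⟪T x, y⟫ = -⟪x, T y⟫) (hK : ∀ x, T x ∈ K) {x y : E} (h : x - y ∈ Kᗮ) :
    T x = T y := by
  rw [← sub_eq_zero, ← map_sub]
  refine ext_inner_right ℝ fun w => ?_
  rw [hT, inner_zero_left, Submodule.inner_left_of_mem_orthogonal (hK w) h, neg_zero]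

theorem stmt_12_general {n : Type*} [NormedAddCommGroup n] [InnerProductSpace ℝ n]
    [FiniteDimensional ℝ n]
    (B : n →ₗ[ℝ] n →ₗ[ℝ] n)
    (h2step : ∀ X Y W, B (B X Y) W = 0)
    (z : Submodule ℝ n) (hz : ∀ X, X ∈ z ↔ ∀ Y, B X Y = 0)
    (zt : Submodule ℝ n) (hzt : zt ≤ z)
    (Ft : n →ₗ[ℝ] n)
    (hFtskew : ∀ X Y, ⟪Ft X, Y⟫ = - ⟪X, Ft Y⟫)
    (hFtrange : ∀ X, Ft X ∈ zᗮ ⊔ zt)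
    (hFtC2 : ∀ U ∈ zᗮ, ∀ V ∈ zᗮ, ∀ W ∈ zᗮ,
      ⟪Ft U, (Submodule.orthogonalProjection zt (B V W) : n)⟫ +
      ⟪Ft V, (Submodule.orthogonalProjection zt (B W U) : n)⟫ +
      ⟪Ft W, (Submodule.orthogonalProjection zt (B U V) : n)⟫ = 0)
    (F : n →ₗ[ℝ] n)
    (hF : ∀ X, F X = Ft ((Submodule.orthogonalProjection zᗮ X : n) +
      (Submodule.orthogonalProjection zt X : n))) :
    (∀ X Y, ⟪F X, Y⟫ = - ⟪X, F Y⟫) ∧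
    (∀ U ∈ zᗮ, ∀ V ∈ zᗮ, ∀ W ∈ zᗮ,
      ⟪(Submodule.orthogonalProjection z (F U) : n), B V W⟫ +
      ⟪(Submodule.orthogonalProjection z (F V) : n), B W U⟫ +
      ⟪(Submodule.orthogonalProjection z (F W) : n), B U V⟫ = 0) ∧
    ((∃ V ∈ zᗮ, Ft V ≠ 0) → ∃ V ∈ zᗮ, F V ≠ 0) := by
  have hF_eq : F = Ft := LinearMap.ext fun X => (hF X).trans <|
    (LinearMap.apply_eq_of_sub_mem_orthogonal hFtskew hFtrange
      (Submodule.sub_starProjection_add_mem_orthogonal_sup hzt X)).symm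
  have hbracket (X Y : n) : B X Y ∈ z := (hz _).mpr (h2step X Y)
  have hterm (U X Y : n) :
      ⟪(Submodule.orthogonalProjection z (Ft U) : n), B X Y⟫ =
        ⟪Ft U, (Submodule.orthogonalProjection zt (B X Y) : n)⟫ :=
    Submodule.inner_starProjection_eq_inner_starProjection_of_mem_sup hzt (hFtrange U)
      (hbracket X Y)
  subst hF_eq
  refine ⟨hFtskew, fun U hU V hV W hW => ?_, id⟩
  rw [hterm, hterm, hterm]
  exact hFtC2 U hU V hV W hW

/-- Let `n = v ⊕ z` be a non-singular 2-step nilpotent metric Lie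
algebra, `z̃ ⊆ z` with orthogonal projection `π`, and `ñ = v ⊕ z̃` the Lie
algebra with bracket `π ∘ [·,·]`. If `F̃` is skew-symmetric on `ñ` and satisfies
(C2) there, then `F(V+Z) := F̃(V + π Z)` is skew-symmetric and satisfies (C2)
on `n`; moreover `F|_v ≠ 0` whenever `F̃|_v ≠ 0`. -/
theorem stmt_12 {n : Type*} [NormedAddCommGroup n] [InnerProductSpace ℝ n]
    [FiniteDimensional ℝ n]
    (B : n →ₗ[ℝ] n →ₗ[ℝ] n)
    (hanti : ∀ X Y, B X Y = - B Y X)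
    (h2step : ∀ X Y W, B (B X Y) W = 0)
    (z : Submodule ℝ n) (hz : ∀ X, X ∈ z ↔ ∀ Y, B X Y = 0)
    (hns : ∀ X, X ∉ z → ∀ Z ∈ z, ∃ Y, B X Y = Z)
    (zt : Submodule ℝ n) (hzt : zt ≤ z)
    (Ft : n →ₗ[ℝ] n)
    (hFtskew : ∀ X Y, ⟪Ft X, Y⟫ = - ⟪X, Ft Y⟫)
    (hFtrange : ∀ X, Ft X ∈ zᗮ ⊔ zt)
    (hFtC2 : ∀ U ∈ zᗮ, ∀ V ∈ zᗮ, ∀ W ∈ zᗮ,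
      ⟪Ft U, (Submodule.orthogonalProjection zt (B V W) : n)⟫ +
      ⟪Ft V, (Submodule.orthogonalProjection zt (B W U) : n)⟫ +
      ⟪Ft W, (Submodule.orthogonalProjection zt (B U V) : n)⟫ = 0)
    (F : n →ₗ[ℝ] n)
    (hF : ∀ X, F X = Ft ((Submodule.orthogonalProjection zᗮ X : n) +
      (Submodule.orthogonalProjection zt X : n))) :
    (∀ X Y, ⟪F X, Y⟫ = - ⟪X, F Y⟫) ∧
    (∀ U ∈ zᗮ, ∀ V ∈ zᗮ, ∀ W ∈ zᗮ,
      ⟪(Submodule.orthogonalProjection z (F U) : n), B V W⟫ +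
      ⟪(Submodule.orthogonalProjection z (F V) : n), B W U⟫ +
      ⟪(Submodule.orthogonalProjection z (F W) : n), B U V⟫ = 0) ∧
    ((∃ V ∈ zᗮ, Ft V ≠ 0) → ∃ V ∈ zᗮ, F V ≠ 0) :=
  stmt_12_general B h2step z hz zt hzt Ft hFtskew hFtrange hFtC2 F hF
end

section
/- On the complex Heisenberg Lie algebra h(C) of real dimension 6 with its standard complex structure J and standard metric, a skew-symmetric map F₂ of type II (i.e. F₂(v) ⊆ z and F₂(z) ⊆ v) satisfies the closedness condition (C2) if and only if F₂ ∘ J = −J ∘ F₂. -/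
open RealInnerProductSpace

set_option maxHeartbeats 4000000


/-- On the 6-dimensional complex Heisenberg Lie algebra `h(ℂ)`
with its standard complex structure `J` and standard metric, a skew-symmetric
map `F₂` of type II satisfies the closedness condition (C2) if and only if
`F₂ ∘ J = −J ∘ F₂`. -/
theorem stmt_13 {n : Type*} [NormedAddCommGroup n] [InnerProductSpace ℝ n]
    (B : n →ₗ[ℝ] n →ₗ[ℝ] n)
    (X1 Y1 X2 Y2 Z1 Z2 : n)
    (horth : Orthonormal ℝ ![X1, Y1, X2, Y2, Z1, Z2])
    (hspan : Submodule.span ℝ ({X1, Y1, X2, Y2, Z1, Z2} : Set n) = ⊤)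
    (hanti : ∀ X Y, B X Y = - B Y X)
    (hb1 : B X1 Y1 = Z1) (hb2 : B X2 Y2 = - Z1)
    (hb3 : B X1 Y2 = Z2) (hb4 : B X2 Y1 = Z2)
    (hb5 : B X1 X2 = 0) (hb6 : B Y1 Y2 = 0)
    (hcent1 : ∀ X, B Z1 X = 0) (hcent2 : ∀ X, B Z2 X = 0)
    (J : n →ₗ[ℝ] n)
    (hJX : J X1 = X2) (hJY : J Y1 = Y2) (hJZ : J Z1 = Z2)
    (hJ2 : ∀ X, J (J X) = - X)
    (hJskew : ∀ X Y, ⟪J X, Y⟫ = - ⟪X, J Y⟫)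
    (hJad : ∀ U X, J (B U X) = B U (J X))
    (F2 : n →ₗ[ℝ] n)
    (hF2skew : ∀ X Y, ⟪F2 X, Y⟫ = - ⟪X, F2 Y⟫)
    (hF2v : ∀ V ∈ Submodule.span ℝ ({X1, Y1, X2, Y2} : Set n),
      F2 V ∈ Submodule.span ℝ ({Z1, Z2} : Set n))
    (hF2z : ∀ Z ∈ Submodule.span ℝ ({Z1, Z2} : Set n),
      F2 Z ∈ Submodule.span ℝ ({X1, Y1, X2, Y2} : Set n)) :
    (∀ U ∈ Submodule.span ℝ ({X1, Y1, X2, Y2} : Set n),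
     ∀ V ∈ Submodule.span ℝ ({X1, Y1, X2, Y2} : Set n),
     ∀ W ∈ Submodule.span ℝ ({X1, Y1, X2, Y2} : Set n),
      ⟪F2 U, B V W⟫ + ⟪F2 V, B W U⟫ + ⟪F2 W, B U V⟫ = 0) ↔
    (∀ X, F2 (J X) = - J (F2 X)) := by

  have jX2 : J X2 = -X1 := by rw [← hJX, hJ2]
  have jY2 : J Y2 = -Y1 := by rw [← hJY, hJ2]
  have jZ2 : J Z2 = -Z1 := by rw [← hJZ, hJ2]
  have hflip : ∀ u w : n, ⟪F2 u, w⟫ = -⟪F2 w, u⟫ := fun u w => by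
    rw [hF2skew, real_inner_comm]
  have bself : ∀ x : n, B x x = 0 := by
    intro x
    have h := hanti x x
    have h2 : (2:ℝ) • B x x = 0 := by
      rw [two_smul]; nth_rewrite 1 [h]; simp
    rcases smul_eq_zero.mp h2 with h3 | h3
    · norm_num at h3
    · exact h3
  have bY1X1 : B Y1 X1 = -Z1 := by rw [hanti Y1 X1, hb1]
  have bY2X2 : B Y2 X2 = Z1 := by rw [hanti Y2 X2, hb2, neg_neg]
  have bY2X1 : B Y2 X1 = -Z2 := by rw [hanti Y2 X1, hb3]
  have bY1X2 : B Y1 X2 = -Z2 := by rw [hanti Y1 X2, hb4]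
  have bX2X1 : B X2 X1 = 0 := by rw [hanti X2 X1, hb5, neg_zero]
  have bY2Y1 : B Y2 Y1 = 0 := by rw [hanti Y2 Y1, hb6, neg_zero]
  have mX1 : X1 ∈ Submodule.span ℝ ({X1, Y1, X2, Y2} : Set n) := Submodule.subset_span (by simp)
  have mY1 : Y1 ∈ Submodule.span ℝ ({X1, Y1, X2, Y2} : Set n) := Submodule.subset_span (by simp)
  have mX2 : X2 ∈ Submodule.span ℝ ({X1, Y1, X2, Y2} : Set n) := Submodule.subset_span (by simp)
  have mY2 : Y2 ∈ Submodule.span ℝ ({X1, Y1, X2, Y2} : Set n) := Submodule.subset_span (by simp)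
  have mzZ1 : Z1 ∈ Submodule.span ℝ ({Z1, Z2} : Set n) := Submodule.subset_span (by simp)
  have mzZ2 : Z2 ∈ Submodule.span ℝ ({Z1, Z2} : Set n) := Submodule.subset_span (by simp)
  constructor
  · intro hC
    have r1 : ⟪F2 X2, Z1⟫ = ⟪F2 X1, Z2⟫ := by
      have h := hC X1 mX1 Y1 mY1 X2 mX2
      simp only [bY1X2, bX2X1, hb1, inner_neg_right, inner_zero_right] at h
      linarith
    have r3 : ⟪F2 Y2, Z1⟫ = ⟪F2 Y1, Z2⟫ := by
      have h := hC X1 mX1 Y1 mY1 Y2 mY2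
      simp only [hb6, bY2X1, hb1, inner_neg_right, inner_zero_right] at h
      linarith
    have r2 : ⟪F2 X2, Z2⟫ = -⟪F2 X1, Z1⟫ := by
      have h := hC X1 mX1 X2 mX2 Y2 mY2
      simp only [hb2, bY2X1, hb5, inner_neg_right, inner_zero_right] at h
      linarith
    have r4 : ⟪F2 Y2, Z2⟫ = -⟪F2 Y1, Z1⟫ := by
      have h := hC Y1 mY1 X2 mX2 Y2 mY2
      simp only [hb2, bY2Y1, bY1X2, inner_neg_right, inner_zero_right] at h
      linarith
    have ho := (orthonormal_iff_ite (𝕜 := ℝ)).mp horth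
    have ent : ∀ i j : Fin 6, i ≠ j →
        ⟪(![X1,Y1,X2,Y2,Z1,Z2] : Fin 6 → n) i, (![X1,Y1,X2,Y2,Z1,Z2] : Fin 6 → n) j⟫ = 0 :=
      fun i j h => by rw [ho i j, if_neg h]
    have oZ1X1 : ⟪Z1, X1⟫ = 0 := ent 4 0 (by decide)
    have oZ1Y1 : ⟪Z1, Y1⟫ = 0 := ent 4 1 (by decide)
    have oZ1X2 : ⟪Z1, X2⟫ = 0 := ent 4 2 (by decide)
    have oZ1Y2 : ⟪Z1, Y2⟫ = 0 := ent 4 3 (by decide)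
    have oZ2X1 : ⟪Z2, X1⟫ = 0 := ent 5 0 (by decide)
    have oZ2Y1 : ⟪Z2, Y1⟫ = 0 := ent 5 1 (by decide)
    have oZ2X2 : ⟪Z2, X2⟫ = 0 := ent 5 2 (by decide)
    have oZ2Y2 : ⟪Z2, Y2⟫ = 0 := ent 5 3 (by decide)
    have oX1Z1 : ⟪X1, Z1⟫ = 0 := ent 0 4 (by decide)
    have oY1Z1 : ⟪Y1, Z1⟫ = 0 := ent 1 4 (by decide)
    have oX2Z1 : ⟪X2, Z1⟫ = 0 := ent 2 4 (by decide)
    have oY2Z1 : ⟪Y2, Z1⟫ = 0 := ent 3 4 (by decide)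
    have oX1Z2 : ⟪X1, Z2⟫ = 0 := ent 0 5 (by decide)
    have oY1Z2 : ⟪Y1, Z2⟫ = 0 := ent 1 5 (by decide)
    have oX2Z2 : ⟪X2, Z2⟫ = 0 := ent 2 5 (by decide)
    have oY2Z2 : ⟪Y2, Z2⟫ = 0 := ent 3 5 (by decide)
    have pz : ∀ w : n, ⟪Z1, w⟫ = 0 → ⟪Z2, w⟫ = 0 →
        ∀ u ∈ Submodule.span ℝ ({Z1, Z2} : Set n), ⟪u, w⟫ = 0 := by
      intro w h1 h2 u hu
      induction hu using Submodule.span_induction with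
      | mem x hx =>
        simp only [Set.mem_insert_iff, Set.mem_singleton_iff] at hx
        rcases hx with rfl | rfl
        · exact h1
        · exact h2
      | zero => simp
      | add x y hx hy ihx ihy => simp [inner_add_left, ihx, ihy]
      | smul r x hx ih => simp [real_inner_smul_left, ih]
    have pv : ∀ w : n, ⟪X1, w⟫ = 0 → ⟪Y1, w⟫ = 0 → ⟪X2, w⟫ = 0 → ⟪Y2, w⟫ = 0 →
        ∀ u ∈ Submodule.span ℝ ({X1, Y1, X2, Y2} : Set n), ⟪u, w⟫ = 0 := by
      intro w h1 h2 h3 h4 u hu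
      induction hu using Submodule.span_induction with
      | mem x hx =>
        simp only [Set.mem_insert_iff, Set.mem_singleton_iff] at hx
        rcases hx with rfl | rfl | rfl | rfl
        · exact h1
        · exact h2
        · exact h3
        · exact h4
      | zero => simp
      | add x y hx hy ihx ihy => simp [inner_add_left, ihx, ihy]
      | smul r x hx ih => simp [real_inner_smul_left, ih]
    have fX1X1 : ⟪F2 X1, X1⟫ = 0 := pz X1 oZ1X1 oZ2X1 _ (hF2v X1 mX1)
    have fX1Y1 : ⟪F2 X1, Y1⟫ = 0 := pz Y1 oZ1Y1 oZ2Y1 _ (hF2v X1 mX1)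
    have fX1X2 : ⟪F2 X1, X2⟫ = 0 := pz X2 oZ1X2 oZ2X2 _ (hF2v X1 mX1)
    have fX1Y2 : ⟪F2 X1, Y2⟫ = 0 := pz Y2 oZ1Y2 oZ2Y2 _ (hF2v X1 mX1)
    have fY1X1 : ⟪F2 Y1, X1⟫ = 0 := pz X1 oZ1X1 oZ2X1 _ (hF2v Y1 mY1)
    have fY1Y1 : ⟪F2 Y1, Y1⟫ = 0 := pz Y1 oZ1Y1 oZ2Y1 _ (hF2v Y1 mY1)
    have fY1X2 : ⟪F2 Y1, X2⟫ = 0 := pz X2 oZ1X2 oZ2X2 _ (hF2v Y1 mY1)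
    have fY1Y2 : ⟪F2 Y1, Y2⟫ = 0 := pz Y2 oZ1Y2 oZ2Y2 _ (hF2v Y1 mY1)
    have fX2X1 : ⟪F2 X2, X1⟫ = 0 := pz X1 oZ1X1 oZ2X1 _ (hF2v X2 mX2)
    have fX2Y1 : ⟪F2 X2, Y1⟫ = 0 := pz Y1 oZ1Y1 oZ2Y1 _ (hF2v X2 mX2)
    have fX2X2 : ⟪F2 X2, X2⟫ = 0 := pz X2 oZ1X2 oZ2X2 _ (hF2v X2 mX2)
    have fX2Y2 : ⟪F2 X2, Y2⟫ = 0 := pz Y2 oZ1Y2 oZ2Y2 _ (hF2v X2 mX2)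
    have fY2X1 : ⟪F2 Y2, X1⟫ = 0 := pz X1 oZ1X1 oZ2X1 _ (hF2v Y2 mY2)
    have fY2Y1 : ⟪F2 Y2, Y1⟫ = 0 := pz Y1 oZ1Y1 oZ2Y1 _ (hF2v Y2 mY2)
    have fY2X2 : ⟪F2 Y2, X2⟫ = 0 := pz X2 oZ1X2 oZ2X2 _ (hF2v Y2 mY2)
    have fY2Y2 : ⟪F2 Y2, Y2⟫ = 0 := pz Y2 oZ1Y2 oZ2Y2 _ (hF2v Y2 mY2)
    have fZ1Z1 : ⟪F2 Z1, Z1⟫ = 0 := pv Z1 oX1Z1 oY1Z1 oX2Z1 oY2Z1 _ (hF2z Z1 mzZ1)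
    have fZ1Z2 : ⟪F2 Z1, Z2⟫ = 0 := pv Z2 oX1Z2 oY1Z2 oX2Z2 oY2Z2 _ (hF2z Z1 mzZ1)
    have fZ2Z1 : ⟪F2 Z2, Z1⟫ = 0 := pv Z1 oX1Z1 oY1Z1 oX2Z1 oY2Z1 _ (hF2z Z2 mzZ2)
    have fZ2Z2 : ⟪F2 Z2, Z2⟫ = 0 := pv Z2 oX1Z2 oY1Z2 oX2Z2 oY2Z2 _ (hF2z Z2 mzZ2)
    have fZ1X1 : ⟪F2 Z1, X1⟫ = -⟪F2 X1, Z1⟫ := hflip _ _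
    have fZ1Y1 : ⟪F2 Z1, Y1⟫ = -⟪F2 Y1, Z1⟫ := hflip _ _
    have fZ1X2 : ⟪F2 Z1, X2⟫ = -⟪F2 X2, Z1⟫ := hflip _ _
    have fZ1Y2 : ⟪F2 Z1, Y2⟫ = -⟪F2 Y2, Z1⟫ := hflip _ _
    have fZ2X1 : ⟪F2 Z2, X1⟫ = -⟪F2 X1, Z2⟫ := hflip _ _
    have fZ2Y1 : ⟪F2 Z2, Y1⟫ = -⟪F2 Y1, Z2⟫ := hflip _ _
    have fZ2X2 : ⟪F2 Z2, X2⟫ = -⟪F2 X2, Z2⟫ := hflip _ _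
    have fZ2Y2 : ⟪F2 Z2, Y2⟫ = -⟪F2 Y2, Z2⟫ := hflip _ _
    have key : ∀ x ∈ ({X1, Y1, X2, Y2, Z1, Z2} : Set n),
        ∀ w ∈ ({X1, Y1, X2, Y2, Z1, Z2} : Set n),
        ⟪F2 (J x) + J (F2 x), w⟫ = 0 := by
      intro x hx w hw
      simp only [Set.mem_insert_iff, Set.mem_singleton_iff] at hx hw
      rcases hx with rfl | rfl | rfl | rfl | rfl | rfl <;>
        rcases hw with rfl | rfl | rfl | rfl | rfl | rfl <;>
        simp only [inner_add_left, hJskew, hJX, hJY, hJZ, jX2, jY2, jZ2, map_neg,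
          inner_neg_left, inner_neg_right, neg_neg] <;>
        linarith [r1, r2, r3, r4, fX1X1, fX1Y1, fX1X2, fX1Y2, fY1X1, fY1Y1, fY1X2, fY1Y2,
          fX2X1, fX2Y1, fX2X2, fX2Y2, fY2X1, fY2Y1, fY2X2, fY2Y2,
          fZ1Z1, fZ1Z2, fZ2Z1, fZ2Z2, fZ1X1, fZ1Y1, fZ1X2, fZ1Y2, fZ2X1, fZ2Y1, fZ2X2, fZ2Y2]
    have keyx : ∀ w ∈ ({X1, Y1, X2, Y2, Z1, Z2} : Set n), ∀ x : n,
        ⟪F2 (J x) + J (F2 x), w⟫ = 0 := by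
      intro w hw x
      have hx : x ∈ Submodule.span ℝ ({X1, Y1, X2, Y2, Z1, Z2} : Set n) := by
        rw [hspan]; trivial
      induction hx using Submodule.span_induction with
      | mem y hy => exact key y hy w hw
      | zero => simp
      | add y z hy hz ihy ihz =>
        simp only [map_add, inner_add_left] at ihy ihz ⊢
        linarith
      | smul r y hy ih =>
        simp only [map_smul, ← smul_add, real_inner_smul_left, ih, mul_zero]
    have keyall : ∀ x w : n, ⟪F2 (J x) + J (F2 x), w⟫ = 0 := by
      intro x w
      have hw : w ∈ Submodule.span ℝ ({X1, Y1, X2, Y2, Z1, Z2} : Set n) := by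
        rw [hspan]; trivial
      induction hw using Submodule.span_induction with
      | mem y hy => exact keyx y hy x
      | zero => simp
      | add y z hy hz ihy ihz => simp only [inner_add_right, ihy, ihz, add_zero]
      | smul r y hy ih => simp only [real_inner_smul_right, ih, mul_zero]
    intro X
    have h0 : F2 (J X) + J (F2 X) = 0 :=
      inner_self_eq_zero.mp (keyall X (F2 (J X) + J (F2 X)))
    exact eq_neg_of_add_eq_zero_left h0
  · intro hA
    have r1 : ⟪F2 X2, Z1⟫ = ⟪F2 X1, Z2⟫ := by
      have h := hA X1; rw [hJX] at h
      rw [h, inner_neg_left, hJskew, neg_neg, hJZ]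
    have r2 : ⟪F2 X2, Z2⟫ = -⟪F2 X1, Z1⟫ := by
      have h := hA X1; rw [hJX] at h
      rw [h, inner_neg_left, hJskew, neg_neg, jZ2, inner_neg_right]
    have r3 : ⟪F2 Y2, Z1⟫ = ⟪F2 Y1, Z2⟫ := by
      have h := hA Y1; rw [hJY] at h
      rw [h, inner_neg_left, hJskew, neg_neg, hJZ]
    have r4 : ⟪F2 Y2, Z2⟫ = -⟪F2 Y1, Z1⟫ := by
      have h := hA Y1; rw [hJY] at h
      rw [h, inner_neg_left, hJskew, neg_neg, jZ2, inner_neg_right]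
    have base : ∀ u ∈ ({X1, Y1, X2, Y2} : Set n), ∀ v ∈ ({X1, Y1, X2, Y2} : Set n),
        ∀ w ∈ ({X1, Y1, X2, Y2} : Set n),
        ⟪F2 u, B v w⟫ + ⟪F2 v, B w u⟫ + ⟪F2 w, B u v⟫ = 0 := by
      intro u hu v hv w hw
      simp only [Set.mem_insert_iff, Set.mem_singleton_iff] at hu hv hw
      rcases hu with rfl | rfl | rfl | rfl <;> rcases hv with rfl | rfl | rfl | rfl <;>
        rcases hw with rfl | rfl | rfl | rfl <;>
        simp only [hb1, hb2, hb3, hb4, hb5, hb6, bY1X1, bY2X2, bY2X1, bY1X2, bX2X1, bY2Y1,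
          bself, inner_zero_right, inner_neg_right, add_zero, zero_add, neg_zero] <;>
        linarith [r1, r2, r3, r4]
    have lift1 : ∀ u ∈ ({X1, Y1, X2, Y2} : Set n), ∀ v ∈ ({X1, Y1, X2, Y2} : Set n),
        ∀ W ∈ Submodule.span ℝ ({X1, Y1, X2, Y2} : Set n),
        ⟪F2 u, B v W⟫ + ⟪F2 v, B W u⟫ + ⟪F2 W, B u v⟫ = 0 := by
      intro u hu v hv W hW
      induction hW using Submodule.span_induction with
      | mem w hw => exact base u hu v hv w hw
      | zero => simp
      | add x y hx hy ihx ihy =>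
        simp only [map_add, LinearMap.add_apply, inner_add_left, inner_add_right] at ihx ihy ⊢
        linarith
      | smul r x hx ih =>
        simp only [map_smul, LinearMap.smul_apply, real_inner_smul_left,
          real_inner_smul_right] at ih ⊢
        linear_combination r * ih
    have lift2 : ∀ u ∈ ({X1, Y1, X2, Y2} : Set n),
        ∀ V ∈ Submodule.span ℝ ({X1, Y1, X2, Y2} : Set n),
        ∀ W ∈ Submodule.span ℝ ({X1, Y1, X2, Y2} : Set n),
        ⟪F2 u, B V W⟫ + ⟪F2 V, B W u⟫ + ⟪F2 W, B u V⟫ = 0 := by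
      intro u hu V hV W hW
      induction hV using Submodule.span_induction with
      | mem v hv => exact lift1 u hu v hv W hW
      | zero => simp
      | add x y hx hy ihx ihy =>
        simp only [map_add, LinearMap.add_apply, inner_add_left, inner_add_right] at ihx ihy ⊢
        linarith
      | smul r x hx ih =>
        simp only [map_smul, LinearMap.smul_apply, real_inner_smul_left,
          real_inner_smul_right] at ih ⊢
        linear_combination r * ih
    intro U hU V hV W hW
    induction hU using Submodule.span_induction with
    | mem u hu => exact lift2 u hu V hV W hW
    | zero => simp
    | add x y hx hy ihx ihy =>
      simp only [map_add, LinearMap.add_apply, inner_add_left, inner_add_right] at ihx ihy ⊢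
      linarith
    | smul r x hx ih =>
      simp only [map_smul, LinearMap.smul_apply, real_inner_smul_left,
        real_inner_smul_right] at ih ⊢
      linear_combination r * ih
end

section
/- On the octonionic Heisenberg algebra h(O) = O ⊕ Im(O) (pair (8,7)), every skew-symmetric map F of type II satisfying condition (C2) is zero. -/
/-!
Write `Q u = ⟪f u, u⟫`. On a quaternionic triple `u, v, uv` of orthonormal imaginary units,
condition (C2) reads `Q u + Q v + Q (uv) = 0`. Completing `i` to a Cayley–Dickson frame
`i, j, ij, e, ie, je, (ij)e` of `Im 𝕆` gives seven such triples, the lines of the Fano plane, and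
summing them forces `Q i = 0`. Hence `f` is skew on `Im 𝕆`, and (C2) with one argument equal to `1`
gives `⟪f u, v⟫ = ⟪f 1, uv⟫ / 2`. Evaluating (C2) on imaginary `i, j, e` with
`i (je) = j (ei) = e (ij) = f 1` then yields `3/2 ‖f 1‖² = 0`, so `f = 0`, and skew-symmetry
gives `g = 0`. The only non-associative input is `a (bc) = -(ab) c` for mutually orthogonal
imaginary `a, b, c` with `c ⊥ ab`.
-/

open RealInnerProductSpace

theorem exists_inner_self_eq_one_forall_inner_eq_zero {A : Type*} [NormedAddCommGroup A]
    [InnerProductSpace ℝ A] [FiniteDimensional ℝ A] {n : ℕ}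
    (hn : n < Module.finrank ℝ A) (w : Fin n → A) : ∃ e : A, ⟪e, e⟫ = 1 ∧ ∀ m, ⟪w m, e⟫ = 0 := by
  set W := Submodule.span ℝ (Set.range w)
  have hW : Module.finrank ℝ W < Module.finrank ℝ A :=
    ((finrank_range_le_card w).trans_eq (Fintype.card_fin n)).trans_lt hn
  have hWperp : Wᗮ ≠ ⊥ := by
    intro hbot
    have hsum := W.finrank_add_finrank_orthogonal
    rw [hbot, finrank_bot] at hsum
    omega
  obtain ⟨x, hxW, hx0⟩ := Submodule.exists_mem_ne_zero_of_ne_bot hWperp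
  refine ⟨‖x‖⁻¹ • x, ?_, fun m => ?_⟩
  · have : ‖x‖ ≠ 0 := norm_ne_zero_iff.mpr hx0
    rw [real_inner_smul_left, real_inner_smul_right, real_inner_self_eq_norm_mul_norm]
    field_simp
  · rw [real_inner_smul_right, Submodule.inner_right_of_mem_orthogonal
      (Submodule.subset_span (Set.mem_range_self m)) hxW, mul_zero]

structure IsCompositionAlgebra {A : Type*} [NormedAddCommGroup A] [InnerProductSpace ℝ A]
    (mul : A →ₗ[ℝ] A →ₗ[ℝ] A) (one : A) : Prop where
  one_mul : ∀ a, mul one a = a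
  mul_one : ∀ a, mul a one = a
  norm_mul : ∀ a b, ‖mul a b‖ = ‖a‖ * ‖b‖

namespace IsCompositionAlgebra

variable {A : Type*} [NormedAddCommGroup A] [InnerProductSpace ℝ A]
  {mul : A →ₗ[ℝ] A →ₗ[ℝ] A} {one : A}

local notation:70 x:70 " ⋆ " y:71 => mul x y

theorem inner_one_one [Nontrivial A] (h : IsCompositionAlgebra mul one) : ⟪one, one⟫ = 1 := by
  obtain ⟨a, ha⟩ := exists_ne (0 : A)
  have hmul := h.norm_mul one a
  rw [h.one_mul] at hmul
  have hone : ‖one‖ = 1 := by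
    have : ‖a‖ ≠ 0 := norm_ne_zero_iff.mpr ha
    field_simp at hmul
    linarith
  rw [real_inner_self_eq_norm_mul_norm, hone]
  norm_num

variable (h : IsCompositionAlgebra mul one)
include h

theorem inner_self_mul (a b : A) : ⟪a ⋆ b, a ⋆ b⟫ = ⟪a, a⟫ * ⟪b, b⟫ := by
  simp only [real_inner_self_eq_norm_mul_norm, h.norm_mul]
  ring

theorem inner_mul_mul_left (a b c : A) : ⟪a ⋆ b, a ⋆ c⟫ = ⟪a, a⟫ * ⟪b, c⟫ := by
  have habc := h.inner_self_mul a (b + c)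
  rw [map_add, real_inner_add_add_self, real_inner_add_add_self, h.inner_self_mul,
    h.inner_self_mul] at habc
  linear_combination habc / 2

theorem inner_mul_mul_add_inner_mul_mul (a b c d : A) :
    ⟪a ⋆ b, c ⋆ d⟫ + ⟪c ⋆ b, a ⋆ d⟫ = 2 * ⟪a, c⟫ * ⟪b, d⟫ := by
  have hac := h.inner_mul_mul_left (a + c) b d
  simp only [map_add, LinearMap.add_apply, inner_add_left, inner_add_right,
    h.inner_mul_mul_left] at hac
  linear_combination hac + ⟪b, d⟫ * real_inner_comm a c

variable {a b c : A}

theorem inner_mul_left_of_im (ha : ⟪one, a⟫ = 0) (b c : A) : ⟪a ⋆ b, c⟫ = -⟪b, a ⋆ c⟫ := by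
  have hx := h.inner_mul_mul_add_inner_mul_mul a b one c
  rw [h.one_mul, h.one_mul, real_inner_comm one a, ha] at hx
  linear_combination hx

theorem inner_one_mul_of_im (ha : ⟪one, a⟫ = 0) (b : A) : ⟪one, a ⋆ b⟫ = -⟪a, b⟫ := by
  rw [real_inner_comm, h.inner_mul_left_of_im ha, h.mul_one, real_inner_comm]

theorem inner_one_mul_eq_zero (ha : ⟪one, a⟫ = 0) (hab : ⟪a, b⟫ = 0) : ⟪one, a ⋆ b⟫ = 0 := by
  rw [h.inner_one_mul_of_im ha, hab, neg_zero]

theorem mul_mul_self_left_of_im (ha : ⟪one, a⟫ = 0) (c : A) : a ⋆ (a ⋆ c) = -(⟪a, a⟫ • c) := by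
  refine ext_inner_right ℝ fun t => ?_
  rw [h.inner_mul_left_of_im ha, h.inner_mul_mul_left, inner_neg_left, real_inner_smul_left]

theorem mul_mul_add_mul_mul_of_im (ha : ⟪one, a⟫ = 0) (hb : ⟪one, b⟫ = 0) (c : A) :
    a ⋆ (b ⋆ c) + b ⋆ (a ⋆ c) = -((2 * ⟪a, b⟫) • c) := by
  have hab : ⟪one, a + b⟫ = 0 := by rw [inner_add_right, ha, hb, add_zero]
  have hpol := h.mul_mul_self_left_of_im hab c
  simp only [map_add, LinearMap.add_apply, h.mul_mul_self_left_of_im ha,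
    h.mul_mul_self_left_of_im hb, real_inner_add_add_self] at hpol
  linear_combination (norm := module) hpol

theorem mul_anticomm_of_im (ha : ⟪one, a⟫ = 0) (hb : ⟪one, b⟫ = 0) (hab : ⟪a, b⟫ = 0) :
    a ⋆ b = -(b ⋆ a) := by
  have hanti := h.mul_mul_add_mul_mul_of_im ha hb one
  rw [h.mul_one, h.mul_one, hab, mul_zero, zero_smul, neg_zero] at hanti
  exact eq_neg_of_add_eq_zero_left hanti

theorem mul_mul_eq_neg_mul_mul_of_orthogonal (ha : ⟪one, a⟫ = 0) (hb : ⟪one, b⟫ = 0)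
    (hc : ⟪one, c⟫ = 0) (hab : ⟪a, b⟫ = 0) (hac : ⟪a, c⟫ = 0) (hbc : ⟪b, c⟫ = 0)
    (hc_ab : ⟪a ⋆ b, c⟫ = 0) :
    a ⋆ (b ⋆ c) = -((a ⋆ b) ⋆ c) := by
  -- `a (bc) = -a (cb) = c (ab) = -(ab) c`, using `c ⊥ b`, polarized left alternativity, `c ⊥ ab`.
  have hleft := h.mul_mul_add_mul_mul_of_im ha hc b
  rw [hac, mul_zero, zero_smul, neg_zero] at hleft
  rw [h.mul_anticomm_of_im hb hc hbc, map_neg, eq_neg_of_add_eq_zero_left hleft,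
    h.mul_anticomm_of_im hc (h.inner_one_mul_eq_zero ha hab) (by rw [real_inner_comm, hc_ab]),
    neg_neg]

theorem inner_mul_eq_zero_left (hb : ⟪one, b⟫ = 0) : ⟪a, a ⋆ b⟫ = 0 := by
  have hab := h.inner_mul_mul_left a one b
  rwa [h.mul_one, hb, mul_zero] at hab

theorem inner_mul_eq_zero_right (ha : ⟪one, a⟫ = 0) : ⟪b, a ⋆ b⟫ = 0 := by
  have hab := h.inner_mul_left_of_im ha b b
  rw [real_inner_comm] at hab
  linarith

theorem mul_mul_mul_left (ha : ⟪one, a⟫ = 0) (hb : ⟪one, b⟫ = 0) (hab : ⟪a, b⟫ = 0) :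
    b ⋆ (a ⋆ b) = ⟪b, b⟫ • a := by
  rw [h.mul_anticomm_of_im ha hb hab, map_neg, h.mul_mul_self_left_of_im hb, neg_neg]

theorem mul_mul_mul_right (ha : ⟪one, a⟫ = 0) (hb : ⟪one, b⟫ = 0) (hab : ⟪a, b⟫ = 0) :
    (a ⋆ b) ⋆ a = ⟪a, a⟫ • b := by
  rw [h.mul_anticomm_of_im (h.inner_one_mul_eq_zero ha hab) ha
    (by rw [real_inner_comm, h.inner_mul_eq_zero_left hb]), h.mul_mul_self_left_of_im ha, neg_neg]

theorem exists_im_mul_mul_eq [FiniteDimensional ℝ A] (hdim : 4 < Module.finrank ℝ A)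
    (ha : ⟪one, a⟫ = 0) :
    ∃ i j e : A, ⟪one, i⟫ = 0 ∧ ⟪one, j⟫ = 0 ∧ ⟪one, e⟫ = 0 ∧ ⟪i, j⟫ = 0 ∧ ⟪j, e⟫ = 0 ∧
      ⟪e, i⟫ = 0 ∧ i ⋆ (j ⋆ e) = a ∧ j ⋆ (e ⋆ i) = a ∧ e ⋆ (i ⋆ j) = a := by
  obtain ⟨i, hii, hi⟩ := exists_inner_self_eq_one_forall_inner_eq_zero (by omega) ![one, a]
  obtain ⟨j, hjj, hj⟩ :=
    exists_inner_self_eq_one_forall_inner_eq_zero (by omega) ![one, a, i, i ⋆ a]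
  have hi1 : ⟪one, i⟫ = 0 := hi 0
  have hai : ⟪a, i⟫ = 0 := hi 1
  have hj1 : ⟪one, j⟫ = 0 := hj 0
  have haj : ⟪a, j⟫ = 0 := hj 1
  have hij : ⟪i, j⟫ = 0 := hj 2
  have hia_j : ⟪i ⋆ a, j⟫ = 0 := hj 3
  set k := i ⋆ j
  have hk : ⟪one, k⟫ = 0 := h.inner_one_mul_eq_zero hi1 hij
  have hkk : ⟪k, k⟫ = 1 := by rw [h.inner_self_mul, hii, hjj]; norm_num
  have hkj : ⟪k, j⟫ = 0 := by rw [real_inner_comm]; exact h.inner_mul_eq_zero_right hi1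
  have hka : ⟪k, a⟫ = 0 := by rw [h.inner_mul_left_of_im hi1, real_inner_comm, hia_j, neg_zero]
  -- `e` is chosen so that `k e = -a`.
  set e := k ⋆ a
  have he : ⟪one, e⟫ = 0 := h.inner_one_mul_eq_zero hk hka
  have hie : ⟪i, e⟫ = 0 := by
    rw [← neg_eq_zero, ← h.inner_mul_left_of_im hk, h.mul_mul_mul_right hi1 hj1 hij, hii,
      one_smul, real_inner_comm, haj]
  have hje : ⟪j, e⟫ = 0 := by
    rw [← neg_eq_zero, ← h.inner_mul_left_of_im hk, h.mul_anticomm_of_im hk hj1 hkj,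
      h.mul_mul_mul_left hi1 hj1 hij, hjj, one_smul, inner_neg_left, real_inner_comm, hai,
      neg_zero]
  have hke : ⟪k, e⟫ = 0 := h.inner_mul_eq_zero_left ha
  have hke_mul : k ⋆ e = -a := by rw [h.mul_mul_self_left_of_im hk, hkk, one_smul]
  have hji : j ⋆ i = -k := h.mul_anticomm_of_im hj1 hi1 (by rwa [real_inner_comm])
  refine ⟨i, j, e, hi1, hj1, he, hij, hje, by rwa [real_inner_comm], ?_, ?_, ?_⟩
  · rw [h.mul_mul_eq_neg_mul_mul_of_orthogonal hi1 hj1 he hij hie hje hke, hke_mul, neg_neg]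
  · rw [h.mul_anticomm_of_im he hi1 (by rwa [real_inner_comm]), map_neg,
      h.mul_mul_eq_neg_mul_mul_of_orthogonal hj1 hi1 he (by rwa [real_inner_comm]) hje hie
        (by rw [hji, inner_neg_left, hke, neg_zero]),
      neg_neg, hji, map_neg, LinearMap.neg_apply, hke_mul, neg_neg]
  · rw [h.mul_anticomm_of_im he hk (by rwa [real_inner_comm]), hke_mul, neg_neg]

end IsCompositionAlgebra

section CyclicCondition

variable {A : Type*} [NormedAddCommGroup A] [InnerProductSpace ℝ A]
  (mul : A →ₗ[ℝ] A →ₗ[ℝ] A) (one : A)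

local notation:70 x:70 " ⋆ " y:71 => mul x y

/-- Condition (C2) on imaginary arguments, where `[v, w] = Im (v w)`. -/
def CyclicOnIm (f : A →ₗ[ℝ] A) : Prop :=
  ∀ u v w, ⟪one, u⟫ = 0 → ⟪one, v⟫ = 0 → ⟪one, w⟫ = 0 →
    ⟪f u, v ⋆ w⟫ + ⟪f v, w ⋆ u⟫ + ⟪f w, u ⋆ v⟫ = 0

variable {mul one} {f : A →ₗ[ℝ] A}

namespace CyclicOnIm

variable (h : IsCompositionAlgebra mul one) (hf : CyclicOnIm mul one f)
include h hf

theorem inner_apply_self_add_of_orthonormal {u v : A} (hu : ⟪one, u⟫ = 0) (hv : ⟪one, v⟫ = 0)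
    (huv : ⟪u, v⟫ = 0) (huu : ⟪u, u⟫ = 1) (hvv : ⟪v, v⟫ = 1) :
    ⟪f u, u⟫ + ⟪f v, v⟫ + ⟪f (u ⋆ v), u ⋆ v⟫ = 0 := by
  have hcyc := hf u v (u ⋆ v) hu hv (h.inner_one_mul_eq_zero hu huv)
  rwa [h.mul_mul_mul_left hu hv huv, h.mul_mul_mul_right hu hv huv, huu, hvv, one_smul,
    one_smul] at hcyc

theorem inner_apply_self_eq_zero_of_orthonormal {i j e : A} (hi : ⟪one, i⟫ = 0)
    (hj : ⟪one, j⟫ = 0) (he : ⟪one, e⟫ = 0) (hij : ⟪i, j⟫ = 0) (hie : ⟪i, e⟫ = 0)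
    (hje : ⟪j, e⟫ = 0) (hke : ⟪i ⋆ j, e⟫ = 0) (hii : ⟪i, i⟫ = 1) (hjj : ⟪j, j⟫ = 1)
    (hee : ⟪e, e⟫ = 1) : ⟪f i, i⟫ = 0 := by
  set k := i ⋆ j
  have hk : ⟪one, k⟫ = 0 := h.inner_one_mul_eq_zero hi hij
  have hik : ⟪i, k⟫ = 0 := h.inner_mul_eq_zero_left hj
  have hjk : ⟪j, k⟫ = 0 := h.inner_mul_eq_zero_right hi
  have hunit : ∀ {x y : A}, ⟪x, x⟫ = 1 → ⟪y, y⟫ = 1 → ⟪x ⋆ y, x ⋆ y⟫ = 1 := fun hx hy => by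
    rw [h.inner_self_mul, hx, hy, one_mul]
  have hkk : ⟪k, k⟫ = 1 := hunit hii hjj
  have hjk_mul : j ⋆ k = i := by rw [h.mul_mul_mul_left hi hj hij, hjj, one_smul]
  have hki_mul : k ⋆ i = j := by rw [h.mul_mul_mul_right hi hj hij, hii, one_smul]
  have hik_mul : i ⋆ k = -j := by rw [h.mul_mul_self_left_of_im hi, hii, one_smul]
  have hi_je : ⟪i, j ⋆ e⟫ = 0 := by
    rw [← neg_eq_zero, ← h.inner_mul_left_of_im hj, h.mul_anticomm_of_im hj hi
      (by rwa [real_inner_comm]), inner_neg_left, hke, neg_zero]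
  have hj_ke : ⟪j, k ⋆ e⟫ = 0 := by
    rw [← neg_eq_zero, ← h.inner_mul_left_of_im hk, h.mul_anticomm_of_im hk hj
      (by rwa [real_inner_comm]), hjk_mul, inner_neg_left, hie, neg_zero]
  have hk_ie : ⟪k, i ⋆ e⟫ = 0 := by
    rw [← neg_eq_zero, ← h.inner_mul_left_of_im hi, hik_mul, inner_neg_left, hje, neg_zero]
  have hije : i ⋆ (j ⋆ e) = -(k ⋆ e) :=
    h.mul_mul_eq_neg_mul_mul_of_orthogonal hi hj he hij hie hje hke
  have hjke : j ⋆ (k ⋆ e) = -(i ⋆ e) := by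
    rw [h.mul_mul_eq_neg_mul_mul_of_orthogonal hj hk he hjk hje hke (by rw [hjk_mul, hie]),
      hjk_mul]
  have hkie : k ⋆ (i ⋆ e) = -(j ⋆ e) := by
    rw [h.mul_mul_eq_neg_mul_mul_of_orthogonal hk hi he (by rwa [real_inner_comm]) hke hie
      (by rw [hki_mul, hje]), hki_mul]
  have line := fun {u v : A} => hf.inner_apply_self_add_of_orthonormal h (u := u) (v := v)
  have hQneg : ∀ x, ⟪f (-x), -x⟫ = ⟪f x, x⟫ := fun x => by rw [map_neg, inner_neg_neg]
  -- The seven lines of the Fano plane: each of the seven points lies on three of them.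
  have l₁ := line hi hj hij hii hjj
  have l₂ := line hi he hie hii hee
  have l₃ := line hj he hje hjj hee
  have l₄ := line hk he hke hkk hee
  have l₅ := line hi (h.inner_one_mul_eq_zero hj hje) hi_je hii (hunit hjj hee)
  have l₆ := line hj (h.inner_one_mul_eq_zero hk hke) hj_ke hjj (hunit hkk hee)
  have l₇ := line hk (h.inner_one_mul_eq_zero hi hie) hk_ie hkk (hunit hii hee)
  rw [hije, hQneg] at l₅
  rw [hjke, hQneg] at l₆
  rw [hkie, hQneg] at l₇
  linarith

theorem inner_apply_self_eq_zero [FiniteDimensional ℝ A] (hdim : 4 < Module.finrank ℝ A)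
    {u : A} (hu : ⟪one, u⟫ = 0) : ⟪f u, u⟫ = 0 := by
  rcases eq_or_ne u 0 with rfl | hu0
  · rw [inner_zero_right]
  set i := ‖u‖⁻¹ • u
  have hi : ⟪one, i⟫ = 0 := by rw [real_inner_smul_right, hu, mul_zero]
  have hii : ⟪i, i⟫ = 1 := by
    have : ‖u‖ ≠ 0 := norm_ne_zero_iff.mpr hu0
    rw [real_inner_smul_left, real_inner_smul_right, real_inner_self_eq_norm_mul_norm]
    field_simp
  obtain ⟨j, hjj, hj⟩ := exists_inner_self_eq_one_forall_inner_eq_zero (by omega) ![one, i]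
  obtain ⟨e, hee, he⟩ :=
    exists_inner_self_eq_one_forall_inner_eq_zero (by omega) ![one, i, j, i ⋆ j]
  have hQi := hf.inner_apply_self_eq_zero_of_orthonormal h hi (hj 0) (he 0) (hj 1) (he 1) (he 2)
    (he 3) hii hjj hee
  have hui : u = ‖u‖ • i := by rw [smul_inv_smul₀ (norm_ne_zero_iff.mpr hu0)]
  rw [hui, map_smul, real_inner_smul_left, real_inner_smul_right, hQi, mul_zero, mul_zero]

theorem inner_apply_eq_half_inner_mul [FiniteDimensional ℝ A] (hdim : 4 < Module.finrank ℝ A)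
    (hA : ∀ u v, ⟪one, u⟫ = 0 → ⟪one, v⟫ = 0 → ⟪f v, u⟫ - ⟪f u, v⟫ + ⟪f one, u ⋆ v⟫ = 0)
    (u v : A) (hu : ⟪one, u⟫ = 0) (hv : ⟪one, v⟫ = 0) : ⟪f u, v⟫ = ⟪f one, u ⋆ v⟫ / 2 := by
  have hQ := hf.inner_apply_self_eq_zero h hdim (u := u + v)
    (by rw [inner_add_right, hu, hv, add_zero])
  simp only [map_add, inner_add_left, inner_add_right, hf.inner_apply_self_eq_zero h hdim hu,
    hf.inner_apply_self_eq_zero h hdim hv] at hQ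
  linarith [hA u v hu hv]

theorem apply_one_eq_zero [FiniteDimensional ℝ A] (hdim : 4 < Module.finrank ℝ A)
    (ha : ⟪one, f one⟫ = 0)
    (hhalf : ∀ u v, ⟪one, u⟫ = 0 → ⟪one, v⟫ = 0 → ⟪f u, v⟫ = ⟪f one, u ⋆ v⟫ / 2) :
    f one = 0 := by
  obtain ⟨i, j, e, hi, hj, he, hij, hje, hei, hije, hjei, heij⟩ := h.exists_im_mul_mul_eq hdim ha
  have hcyc := hf i j e hi hj he
  rw [hhalf i _ hi (h.inner_one_mul_eq_zero hj hje), hhalf j _ hj (h.inner_one_mul_eq_zero he hei),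
    hhalf e _ he (h.inner_one_mul_eq_zero hi hij), hije, hjei, heij] at hcyc
  exact inner_self_eq_zero (𝕜 := ℝ) |>.mp (by linarith)

theorem eq_zero [FiniteDimensional ℝ A] (hdim : 4 < Module.finrank ℝ A)
    (hfim : ∀ u, ⟪one, f u⟫ = 0)
    (hA : ∀ u v, ⟪one, u⟫ = 0 → ⟪one, v⟫ = 0 → ⟪f v, u⟫ - ⟪f u, v⟫ + ⟪f one, u ⋆ v⟫ = 0) :
    f = 0 := by
  have hhalf := hf.inner_apply_eq_half_inner_mul h hdim hA
  have h1 : f one = 0 := hf.apply_one_eq_zero h hdim (hfim one) hhalf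
  have him : ∀ u, ⟪one, u⟫ = 0 → f u = 0 := fun u hu =>
    inner_self_eq_zero.mp (by rw [hhalf u (f u) hu (hfim u), h1, inner_zero_left, zero_div])
  have : Nontrivial A := Module.nontrivial_of_finrank_pos (R := ℝ) (by omega)
  ext x
  have hx : ⟪one, x - ⟪one, x⟫ • one⟫ = 0 := by
    rw [inner_sub_right, real_inner_smul_right, h.inner_one_one, mul_one, sub_self]
  simpa [h1] using him _ hx

end CyclicOnIm

end CyclicCondition

/-- `𝕆` is axiomatized as an 8-dimensional normed unital real algebra (by Hurwitz's theorem, the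
octonions); the type II map is given by its components `f : v → z` and `g : z → v`. -/
theorem stmt_17 {A : Type*} [NormedAddCommGroup A] [InnerProductSpace ℝ A]
    [FiniteDimensional ℝ A] (hdim : Module.finrank ℝ A = 8)
    (mul : A →ₗ[ℝ] A →ₗ[ℝ] A) (one : A)
    (honel : ∀ a, mul one a = a) (honer : ∀ a, mul a one = a)
    (hnorm : ∀ a b, ‖mul a b‖ = ‖a‖ * ‖b‖)
    (conj : A → A) (hconj : ∀ a, conj a = (2 * ⟪one, a⟫) • one - a)
    (im : A → A) (him : ∀ a, im a = a - ⟪one, a⟫ • one)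
    (br : A → A → A) (hbr : ∀ u v, br u v = - im (mul u (conj v)))
    (f : A →ₗ[ℝ] A) (g : A →ₗ[ℝ] A)
    (hfim : ∀ u, ⟪one, f u⟫ = 0)
    (hskew : ∀ u : A, ∀ zz : A, ⟪one, zz⟫ = 0 → ⟪f u, zz⟫ = - ⟪u, g zz⟫)
    (hC2 : ∀ u v w : A,
      ⟪f u, br v w⟫ + ⟪f v, br w u⟫ + ⟪f w, br u v⟫ = 0) :
    f = 0 ∧ ∀ zz : A, ⟪one, zz⟫ = 0 → g zz = 0 := by
  have h : IsCompositionAlgebra mul one := ⟨honel, honer, hnorm⟩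
  have : Nontrivial A := Module.nontrivial_of_finrank_eq_succ hdim
  have hbr_apply : ∀ u v w, ⟪f u, br v w⟫ = ⟪f u, mul v w⟫ - 2 * ⟪one, w⟫ * ⟪f u, v⟫ := by
    intro u v w
    rw [hbr, him, hconj, inner_neg_right, inner_sub_right, real_inner_smul_right,
      real_inner_comm one, hfim, map_sub, map_smul, h.mul_one, inner_sub_right,
      real_inner_smul_right]
    ring
  have hcyc : CyclicOnIm mul one f := fun u v w hu hv hw => by
    simpa only [hbr_apply, hu, hv, hw, mul_zero, zero_mul, sub_zero] using hC2 u v w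
  have hA : ∀ u v, ⟪one, u⟫ = 0 → ⟪one, v⟫ = 0 →
      ⟪f v, u⟫ - ⟪f u, v⟫ + ⟪f one, mul u v⟫ = 0 := fun u v hu hv => by
    have hC2' := hC2 u v one
    rw [hbr_apply, hbr_apply, hbr_apply, h.inner_one_one, h.one_mul, h.mul_one, hu, hv] at hC2'
    linarith
  have hf : f = 0 := hcyc.eq_zero h (by omega) hfim hA
  refine ⟨hf, fun zz hzz => inner_self_eq_zero (𝕜 := ℝ) |>.mp ?_⟩
  have hg := hskew (g zz) zz hzz
  rw [hf, LinearMap.zero_apply, inner_zero_left] at hg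
  linarith
end

section
/- On the H-type Lie algebra n = (O × O) ⊕ O of dimension 24 (pair (16,8)), every skew-symmetric map F of type II satisfying condition (C2) is zero. -/
open RealInnerProductSpace Module

/-!
Evaluating (C2) on `(U, 0), (W, 0), (0, V)` with `W = 1` gives `⟪f (U, 0), V⟫ = ⟪c, U V⟫` for
`c = f (1, 0)`, and then that `⟪c, x (y z)⟫` is symmetric in `x, y`. Left multiplication by an
element orthogonal to `1` is skew-adjoint, so `a (b c) = b (a c)` for such `a, b`; if moreover
`a ⊥ b`, polarizing `‖a x‖ = ‖a‖ ‖x‖` shows that `L_a` and `L_b` anticommute. Hence `a (b c) = 0`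
and `c = 0`, the dimension being large enough to find nonzero `a, b`. The same argument for the
opposite multiplication handles `V ↦ f (0, V)`, and skew-symmetry then forces `g = 0`.
-/

theorem exists_ne_zero_inner_eq_zero_of_three_le_finrank {E : Type*} [NormedAddCommGroup E]
    [InnerProductSpace ℝ E] (hE : 3 ≤ finrank ℝ E) (v : E) :
    ∃ a b : E, a ≠ 0 ∧ b ≠ 0 ∧ ⟪a, b⟫ = 0 ∧ ⟪a, v⟫ = 0 ∧ ⟪b, v⟫ = 0 := by
  have : FiniteDimensional ℝ E := Module.finite_of_finrank_pos (by omega)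
  have hK : 2 ≤ finrank ℝ (ℝ ∙ v)ᗮ := by
    have hsum := (ℝ ∙ v).finrank_add_finrank_orthogonal
    have hv : finrank ℝ (ℝ ∙ v) ≤ 1 := by
      simpa using finrank_span_le_card (R := ℝ) ({v} : Set E)
    omega
  let b := stdOrthonormalBasis ℝ (ℝ ∙ v)ᗮ
  have hb : ∀ i, ⟪(b i : E), v⟫ = 0 := fun i =>
    Submodule.mem_orthogonal_singleton_iff_inner_left.1 (b i).2
  refine ⟨b ⟨0, by omega⟩, b ⟨1, by omega⟩, ?_, ?_, ?_, hb _, hb _⟩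
  · exact_mod_cast b.orthonormal.ne_zero _
  · exact_mod_cast b.orthonormal.ne_zero _
  · exact b.orthonormal.2 (by simp)

section NormedBilinear

variable {A : Type*} [NormedAddCommGroup A] [InnerProductSpace ℝ A] {mul : A →ₗ[ℝ] A →ₗ[ℝ] A}

theorem inner_mul_mul_same_left (hnorm : ∀ a b, ‖mul a b‖ = ‖a‖ * ‖b‖) (a x y : A) :
    ⟪mul a x, mul a y⟫ = ‖a‖ * ‖a‖ * ⟪x, y⟫ := by
  rw [real_inner_eq_norm_add_mul_self_sub_norm_mul_self_sub_norm_mul_self_div_two,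
    real_inner_eq_norm_add_mul_self_sub_norm_mul_self_sub_norm_mul_self_div_two x y,
    ← map_add, hnorm, hnorm, hnorm]
  ring

theorem inner_mul_mul_add_inner_mul_mul (hnorm : ∀ a b, ‖mul a b‖ = ‖a‖ * ‖b‖) (a b x y : A) :
    ⟪mul a x, mul b y⟫ + ⟪mul b x, mul a y⟫ = 2 * ⟪a, b⟫ * ⟪x, y⟫ := by
  have hab := inner_mul_mul_same_left hnorm (a + b) x y
  simp only [map_add, LinearMap.add_apply, inner_add_left, inner_add_right,
    inner_mul_mul_same_left hnorm, norm_add_mul_self_real] at hab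
  linarith

theorem inner_mul_left_eq_neg (hnorm : ∀ a b, ‖mul a b‖ = ‖a‖ * ‖b‖) {one : A}
    (honel : ∀ a, mul one a = a) {e : A} (he : ⟪e, one⟫ = 0) (x y : A) :
    ⟪mul e x, y⟫ = -⟪x, mul e y⟫ := by
  have h := inner_mul_mul_add_inner_mul_mul hnorm e one x y
  rw [honel, honel, he] at h
  linarith

theorem mul_mul_eq_neg_mul_mul (hnorm : ∀ a b, ‖mul a b‖ = ‖a‖ * ‖b‖) {one : A}
    (honel : ∀ a, mul one a = a) {a b : A} (ha : ⟪a, one⟫ = 0) (hb : ⟪b, one⟫ = 0)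
    (hab : ⟪a, b⟫ = 0) (x : A) :
    mul a (mul b x) = -mul b (mul a x) := by
  refine ext_inner_right ℝ fun y => ?_
  have h := inner_mul_mul_add_inner_mul_mul hnorm a b x y
  rw [hab] at h
  rw [inner_neg_left, inner_mul_left_eq_neg hnorm honel ha (mul b x),
    inner_mul_left_eq_neg hnorm honel hb (mul a x)]
  linarith

theorem inner_mul_mul_eq_inner_mul_mul (hnorm : ∀ a b, ‖mul a b‖ = ‖a‖ * ‖b‖) {one : A}
    (honel : ∀ a, mul one a = a) {a b : A} (ha : ⟪a, one⟫ = 0) (hb : ⟪b, one⟫ = 0)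
    (x y : A) :
    ⟪mul a (mul b x), y⟫ = ⟪x, mul b (mul a y)⟫ := by
  rw [inner_mul_left_eq_neg hnorm honel ha, inner_mul_left_eq_neg hnorm honel hb, neg_neg]

theorem eq_zero_of_inner_mul_mul_comm (hnorm : ∀ a b, ‖mul a b‖ = ‖a‖ * ‖b‖) {one : A}
    (honel : ∀ a, mul one a = a) (hA : 3 ≤ finrank ℝ A) {c : A}
    (hc : ∀ x y z, ⟪c, mul x (mul y z)⟫ = ⟪c, mul y (mul x z)⟫) : c = 0 := by
  obtain ⟨a, b, ha0, hb0, hab, ha, hb⟩ := exists_ne_zero_inner_eq_zero_of_three_le_finrank hA one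
  have hcomm : mul a (mul b c) = mul b (mul a c) := ext_inner_right ℝ fun z => by
    rw [inner_mul_mul_eq_inner_mul_mul hnorm honel ha hb,
      inner_mul_mul_eq_inner_mul_mul hnorm honel hb ha, hc]
  have hanti := mul_mul_eq_neg_mul_mul hnorm honel ha hb hab c
  have hzero : mul a (mul b c) = 0 := by
    rw [← hcomm, eq_neg_iff_add_eq_zero, ← two_smul ℝ, smul_eq_zero] at hanti
    exact hanti.resolve_left two_ne_zero
  rw [← norm_eq_zero, hnorm, hnorm] at hzero
  simpa [ha0, hb0] using hzero

theorem eq_zero_of_inner_apply_mul_symm (hnorm : ∀ a b, ‖mul a b‖ = ‖a‖ * ‖b‖) {one : A}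
    (honel : ∀ a, mul one a = a) (hA : 3 ≤ finrank ℝ A) (φ : A →ₗ[ℝ] A)
    (hφ : ∀ u w v, ⟪φ u, mul w v⟫ = ⟪φ w, mul u v⟫) : φ = 0 := by
  have hrep : ∀ u v, ⟪φ u, v⟫ = ⟪φ one, mul u v⟫ := fun u v => by
    rw [← hφ, honel]
  have hone : φ one = 0 := eq_zero_of_inner_mul_mul_comm hnorm honel hA fun x y z => by
    rw [← hrep, hφ, hrep]
  ext u
  rw [LinearMap.zero_apply, ← inner_self_eq_zero (𝕜 := ℝ), hrep, hone, inner_zero_left]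

end NormedBilinear

theorem stmt_18_general {A : Type*} [NormedAddCommGroup A] [InnerProductSpace ℝ A]
    (hdim : Module.finrank ℝ A = 8)
    (mul : A →ₗ[ℝ] A →ₗ[ℝ] A) (one : A)
    (honel : ∀ a, mul one a = a) (honer : ∀ a, mul a one = a)
    (hnorm : ∀ a b, ‖mul a b‖ = ‖a‖ * ‖b‖)
    (br : A × A → A × A → A)
    (hbr : ∀ p q : A × A, br p q = mul p.1 q.2 - mul q.1 p.2)
    (f : A × A →ₗ[ℝ] A) (g : A →ₗ[ℝ] A × A)
    (hskew : ∀ p : A × A, ∀ zz : A,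
      ⟪f p, zz⟫ = - (⟪p.1, (g zz).1⟫ + ⟪p.2, (g zz).2⟫))
    (hC2 : ∀ p q r : A × A,
      ⟪f p, br q r⟫ + ⟪f q, br r p⟫ + ⟪f r, br p q⟫ = 0) :
    f = 0 ∧ g = 0 := by
  have hA : 3 ≤ finrank ℝ A := by omega
  have hleft : ∀ u w v, ⟪f (u, 0), mul w v⟫ = ⟪f (w, 0), mul u v⟫ := fun u w v => by
    have h := hC2 (u, 0) (w, 0) (0, v)
    simp only [hbr, map_zero, sub_zero, zero_sub, sub_self, inner_neg_right, inner_zero_right,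
      add_zero] at h
    linarith
  have hright : ∀ v w u, ⟪f (0, v), mul u w⟫ = ⟪f (0, w), mul u v⟫ := fun v w u => by
    have h := hC2 (0, v) (0, w) (u, 0)
    simp only [hbr, map_zero, LinearMap.zero_apply, sub_zero, zero_sub, sub_self,
      inner_neg_right, inner_zero_right, add_zero] at h
    linarith
  have hf : f = 0 := by
    refine LinearMap.prod_ext ?_ ?_
    · exact eq_zero_of_inner_apply_mul_symm hnorm honel hA _ hleft
    · exact eq_zero_of_inner_apply_mul_symm (mul := mul.flip)
        (fun a b => by rw [LinearMap.flip_apply, hnorm, mul_comm]) honer hA _ hright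
  refine ⟨hf, LinearMap.ext fun z => Prod.ext ?_ ?_⟩
  · simpa [hf] using hskew ((g z).1, 0) z
  · simpa [hf] using hskew (0, (g z).2) z

/-- On the H-type Lie algebra `n = (𝕆 × 𝕆) ⊕ 𝕆` of dimension 24
(pair (16,8)), every skew-symmetric map of type II satisfying condition (C2) is
zero.  `𝕆` is axiomatized as an 8-dimensional normed real division algebra
(by Hurwitz's theorem, the octonions); the bracket on `v = 𝕆 × 𝕆` is
`[(U,V),(Ũ,Ṽ)] = U·Ṽ − Ũ·V ∈ z = 𝕆`; a type II map is encoded by its two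
components `f : v → z` and `g : z → v`, tied together by skew-symmetry with
respect to the product inner product on `v`. -/
theorem stmt_18 {A : Type*} [NormedAddCommGroup A] [InnerProductSpace ℝ A]
    [FiniteDimensional ℝ A] (hdim : Module.finrank ℝ A = 8)
    (mul : A →ₗ[ℝ] A →ₗ[ℝ] A) (one : A)
    (honel : ∀ a, mul one a = a) (honer : ∀ a, mul a one = a)
    (hnorm : ∀ a b, ‖mul a b‖ = ‖a‖ * ‖b‖)
    (br : A × A → A × A → A)
    (hbr : ∀ p q : A × A, br p q = mul p.1 q.2 - mul q.1 p.2)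
    (f : A × A →ₗ[ℝ] A) (g : A →ₗ[ℝ] A × A)
    (hskew : ∀ p : A × A, ∀ zz : A,
      ⟪f p, zz⟫ = - (⟪p.1, (g zz).1⟫ + ⟪p.2, (g zz).2⟫))
    (hC2 : ∀ p q r : A × A,
      ⟪f p, br q r⟫ + ⟪f q, br r p⟫ + ⟪f r, br p q⟫ = 0) :
    f = 0 ∧ g = 0 :=
  stmt_18_general hdim mul one honel honer hnorm br hbr f g hskew hC2
end

section
/- Let h = v ⊕ z be an H-type Lie algebra, Z₁ ∈ z a unit vector, and v = v₁ ⊕ v₂ an orthogonal decomposition with v₁, v₂ invariant under j_{Z₁}. For r > 0 define a new family of skew-symmetric maps j̃_{Z+λZ₁}(V₁+V₂) = j_{Z+λZ₁}(V₁+V₂) + (r−1) j_{λZ₁}V₂ for Z ⊥ Z₁, λ ∈ ℝ, V_i ∈ v_i. Then every j̃_W for W ∈ z nonzero is invertible, i.e. the resulting 2-step nilpotent Lie algebra n_r is non-singular. -/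
open RealInnerProductSpace

/-! Write `W = Z + λ Z₁` with `Z ⊥ Z₁` and `V = V₁ + V₂`, so that `j̃_W V = j_W V + (r - 1) λ j_{Z₁} V₂`.
Polarizing the H-type identity `‖j_Z V‖ = ‖Z‖ ‖V‖` gives `⟪j_W V, j_{Z₁} V⟫ = λ ‖V‖²`, and
`⟪j_{Z₁} V₂, j_{Z₁} V⟫ = ⟪V₂, V⟫ = ‖V₂‖²`; hence `⟪j̃_W V, j_{Z₁} V⟫ = λ (‖V₁‖² + r ‖V₂‖²)`, which
forces `V = 0` when `j̃_W V = 0` and `λ ≠ 0`. When `λ = 0`, `j̃_W = j_W` is `‖W‖` times an isometry.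
In finite dimension injectivity of `j̃_W` on `v` gives surjectivity. -/

namespace HType

variable {E : Type*} [NormedAddCommGroup E] [InnerProductSpace ℝ E]
  {B : E →ₗ[ℝ] E →ₗ[ℝ] E} {z : Submodule ℝ E} {j : E → E →ₗ[ℝ] E}

theorem j_add_apply (hj : ∀ Z ∈ z, ∀ X Y : E, ⟪j Z X, Y⟫ = ⟪Z, B X Y⟫)
    {Z Z' : E} (hZ : Z ∈ z) (hZ' : Z' ∈ z) (X : E) :
    j (Z + Z') X = j Z X + j Z' X :=
  ext_inner_right ℝ fun Y => by
    rw [inner_add_left, hj _ (add_mem hZ hZ'), hj Z hZ, hj Z' hZ', inner_add_left]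

theorem j_smul_apply (hj : ∀ Z ∈ z, ∀ X Y : E, ⟪j Z X, Y⟫ = ⟪Z, B X Y⟫)
    {Z : E} (hZ : Z ∈ z) (c : ℝ) (X : E) :
    j (c • Z) X = c • j Z X :=
  ext_inner_right ℝ fun Y => by
    rw [real_inner_smul_left, hj _ (z.smul_mem c hZ), hj Z hZ, real_inner_smul_left]

theorem inner_j_apply_left (hanti : ∀ X Y, B X Y = -B Y X)
    (hj : ∀ Z ∈ z, ∀ X Y : E, ⟪j Z X, Y⟫ = ⟪Z, B X Y⟫) {Z : E} (hZ : Z ∈ z) (X Y : E) :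
    ⟪j Z X, Y⟫ = -⟪X, j Z Y⟫ := by
  rw [hj Z hZ, real_inner_comm (j Z Y), hj Z hZ, hanti, inner_neg_right]

theorem j_apply_mem_orthogonal (hanti : ∀ X Y, B X Y = -B Y X)
    (hcentral : ∀ Y ∈ z, ∀ X, B Y X = 0)
    (hj : ∀ Z ∈ z, ∀ X Y : E, ⟪j Z X, Y⟫ = ⟪Z, B X Y⟫) {Z : E} (hZ : Z ∈ z) (X : E) :
    j Z X ∈ zᗮ := by
  rw [Submodule.mem_orthogonal]
  intro Y hY
  rw [real_inner_comm, hj Z hZ, hanti, hcentral Y hY, neg_zero, inner_zero_right]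

theorem inner_j_apply_j_apply (hanti : ∀ X Y, B X Y = -B Y X)
    (hj : ∀ Z ∈ z, ∀ X Y : E, ⟪j Z X, Y⟫ = ⟪Z, B X Y⟫)
    (hH : ∀ Z ∈ z, ∀ V ∈ zᗮ, j Z (j Z V) = -(‖Z‖ ^ 2 • V))
    {Z : E} (hZ : Z ∈ z) {V : E} (hV : V ∈ zᗮ) (V' : E) :
    ⟪j Z V, j Z V'⟫ = ‖Z‖ ^ 2 * ⟪V, V'⟫ := by
  rw [← neg_neg ⟪j Z V, j Z V'⟫, ← inner_j_apply_left hanti hj hZ, hH Z hZ V hV, inner_neg_left,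
    neg_neg, real_inner_smul_left]

theorem inner_j_apply_j_apply_same (hanti : ∀ X Y, B X Y = -B Y X)
    (hj : ∀ Z ∈ z, ∀ X Y : E, ⟪j Z X, Y⟫ = ⟪Z, B X Y⟫)
    (hH : ∀ Z ∈ z, ∀ V ∈ zᗮ, j Z (j Z V) = -(‖Z‖ ^ 2 • V))
    {Z Z' : E} (hZ : Z ∈ z) (hZ' : Z' ∈ z) {V : E} (hV : V ∈ zᗮ) :
    ⟪j Z V, j Z' V⟫ = ⟪Z, Z'⟫ * ⟪V, V⟫ := by
  have h := inner_j_apply_j_apply hanti hj hH (add_mem hZ hZ') hV V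
  rw [j_add_apply hj hZ hZ', inner_add_left, inner_add_right, inner_add_right,
    inner_j_apply_j_apply hanti hj hH hZ hV, inner_j_apply_j_apply hanti hj hH hZ' hV,
    real_inner_comm (j Z V) (j Z' V), norm_add_sq_real] at h
  linear_combination h / 2

theorem inner_j_add_smul_j_apply (hanti : ∀ X Y, B X Y = -B Y X)
    (hj : ∀ Z ∈ z, ∀ X Y : E, ⟪j Z X, Y⟫ = ⟪Z, B X Y⟫)
    (hH : ∀ Z ∈ z, ∀ V ∈ zᗮ, j Z (j Z V) = -(‖Z‖ ^ 2 • V))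
    {Z₁ : E} (hZ₁ : Z₁ ∈ z) (hZ₁norm : ‖Z₁‖ = 1) {W : E} (hW : W ∈ z)
    {V₁ V₂ : E} (hV : V₁ + V₂ ∈ zᗮ) (horth : ⟪V₁, V₂⟫ = 0) (r : ℝ) :
    ⟪j W (V₁ + V₂) + ((r - 1) * ⟪W, Z₁⟫) • j Z₁ V₂, j Z₁ (V₁ + V₂)⟫ =
      ⟪W, Z₁⟫ * (‖V₁‖ ^ 2 + r * ‖V₂‖ ^ 2) := by
  have hV₂ : ⟪j Z₁ V₂, j Z₁ (V₁ + V₂)⟫ = ‖V₂‖ ^ 2 := by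
    rw [real_inner_comm, inner_j_apply_j_apply hanti hj hH hZ₁ hV, hZ₁norm, inner_add_left,
      horth, real_inner_self_eq_norm_sq]
    ring
  rw [inner_add_left, inner_j_apply_j_apply_same hanti hj hH hW hZ₁ hV, real_inner_smul_left, hV₂,
    ← real_inner_self_eq_norm_sq, ← real_inner_self_eq_norm_sq, inner_add_left, inner_add_right,
    inner_add_right, horth, real_inner_comm V₁ V₂, horth]
  ring

theorem eq_zero_of_j_add_smul_j_apply_eq_zero (hanti : ∀ X Y, B X Y = -B Y X)
    (hj : ∀ Z ∈ z, ∀ X Y : E, ⟪j Z X, Y⟫ = ⟪Z, B X Y⟫)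
    (hH : ∀ Z ∈ z, ∀ V ∈ zᗮ, j Z (j Z V) = -(‖Z‖ ^ 2 • V))
    {Z₁ : E} (hZ₁ : Z₁ ∈ z) (hZ₁norm : ‖Z₁‖ = 1) {W : E} (hW : W ∈ z) (hW0 : W ≠ 0)
    {V₁ V₂ : E} (hV : V₁ + V₂ ∈ zᗮ) (horth : ⟪V₁, V₂⟫ = 0) {r : ℝ} (hr : 0 < r)
    (h0 : j W (V₁ + V₂) + ((r - 1) * ⟪W, Z₁⟫) • j Z₁ V₂ = 0) :
    V₁ + V₂ = 0 := by
  by_cases hlam : ⟪W, Z₁⟫ = 0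
  · rw [hlam, mul_zero, zero_smul, add_zero] at h0
    have h := inner_j_apply_j_apply hanti hj hH hW hV (V₁ + V₂)
    rw [h0, inner_zero_left, eq_comm, mul_eq_zero] at h
    simpa [hW0] using h
  · have h := inner_j_add_smul_j_apply hanti hj hH hZ₁ hZ₁norm hW hV horth r
    rw [h0, inner_zero_left, eq_comm, mul_eq_zero, or_iff_right hlam] at h
    have h₁ : ‖V₁‖ ^ 2 = 0 := by nlinarith [sq_nonneg ‖V₁‖, sq_nonneg ‖V₂‖]
    have h₂ : ‖V₂‖ ^ 2 = 0 := by nlinarith [sq_nonneg ‖V₁‖, sq_nonneg ‖V₂‖]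
    rw [sq_eq_zero_iff, norm_eq_zero] at h₁ h₂
    rw [h₁, h₂, add_zero]

theorem jt_apply_add (hj : ∀ Z ∈ z, ∀ X Y : E, ⟪j Z X, Y⟫ = ⟪Z, B X Y⟫)
    {Z₁ : E} (hZ₁ : Z₁ ∈ z) (hZ₁norm : ‖Z₁‖ = 1) {v₁ v₂ : Submodule ℝ E} {r : ℝ}
    {jt : E → E →ₗ[ℝ] E}
    (hjt : ∀ Z ∈ z, ⟪Z, Z₁⟫ = 0 → ∀ lam : ℝ, ∀ V₁ ∈ v₁, ∀ V₂ ∈ v₂,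
      jt (Z + lam • Z₁) (V₁ + V₂) = j (Z + lam • Z₁) (V₁ + V₂) + (r - 1) • j (lam • Z₁) V₂)
    {W : E} (hW : W ∈ z) {V₁ V₂ : E} (hV₁ : V₁ ∈ v₁) (hV₂ : V₂ ∈ v₂) :
    jt W (V₁ + V₂) = j W (V₁ + V₂) + ((r - 1) * ⟪W, Z₁⟫) • j Z₁ V₂ := by
  have hperp : ⟪W - ⟪W, Z₁⟫ • Z₁, Z₁⟫ = 0 := by
    rw [inner_sub_left, real_inner_smul_left, real_inner_self_eq_norm_sq, hZ₁norm]
    ring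
  have h := hjt _ (sub_mem hW (z.smul_mem _ hZ₁)) hperp ⟪W, Z₁⟫ V₁ hV₁ V₂ hV₂
  rwa [sub_add_cancel, j_smul_apply hj hZ₁, smul_smul] at h

end HType

open HType

theorem stmt_19_general {n : Type*} [NormedAddCommGroup n] [InnerProductSpace ℝ n]
    [FiniteDimensional ℝ n]
    (B : n →ₗ[ℝ] n →ₗ[ℝ] n)
    (hanti : ∀ X Y, B X Y = - B Y X)
    (z : Submodule ℝ n) (hz : ∀ X, X ∈ z ↔ ∀ Y, B X Y = 0)
    (j : n → n →ₗ[ℝ] n)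
    (hj : ∀ Z ∈ z, ∀ X Y : n, ⟪j Z X, Y⟫ = ⟪Z, B X Y⟫)
    (hH : ∀ Z ∈ z, ∀ V ∈ zᗮ, j Z (j Z V) = - (‖Z‖ ^ 2 • V))
    (Z₁ : n) (hZ₁ : Z₁ ∈ z) (hZ₁norm : ‖Z₁‖ = 1)
    (v₁ v₂ : Submodule ℝ n)
    (horth : ∀ a ∈ v₁, ∀ b ∈ v₂, ⟪a, b⟫ = 0)
    (hsup : v₁ ⊔ v₂ = zᗮ)
    (r : ℝ) (hr : 0 < r)
    (jt : n → n →ₗ[ℝ] n)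
    (hjt : ∀ Z ∈ z, ⟪Z, Z₁⟫ = 0 → ∀ lam : ℝ, ∀ V₁ ∈ v₁, ∀ V₂ ∈ v₂,
      jt (Z + lam • Z₁) (V₁ + V₂) =
        j (Z + lam • Z₁) (V₁ + V₂) + (r - 1) • j (lam • Z₁) V₂) :
    ∀ W ∈ z, W ≠ 0 →
      (∀ V ∈ zᗮ, jt W V = 0 → V = 0) ∧ (∀ X ∈ zᗮ, ∃ V ∈ zᗮ, jt W V = X) := by
  intro W hW hW0
  have hdecomp : ∀ V ∈ zᗮ, ∃ V₁ ∈ v₁, ∃ V₂ ∈ v₂, V₁ + V₂ = V := fun V hV =>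
    Submodule.mem_sup.mp (hsup ▸ hV)
  have hinj : ∀ V ∈ zᗮ, jt W V = 0 → V = 0 := by
    intro V hV h0
    obtain ⟨V₁, hV₁, V₂, hV₂, rfl⟩ := hdecomp V hV
    rw [jt_apply_add hj hZ₁ hZ₁norm hjt hW hV₁ hV₂] at h0
    exact eq_zero_of_j_add_smul_j_apply_eq_zero hanti hj hH hZ₁ hZ₁norm hW hW0 hV
      (horth V₁ hV₁ V₂ hV₂) hr h0
  have hmaps : ∀ V ∈ zᗮ, jt W V ∈ zᗮ := by
    intro V hV
    obtain ⟨V₁, hV₁, V₂, hV₂, rfl⟩ := hdecomp V hV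
    have hcentral : ∀ Y ∈ z, ∀ X, B Y X = 0 := fun Y hY => (hz Y).mp hY
    rw [jt_apply_add hj hZ₁ hZ₁norm hjt hW hV₁ hV₂]
    exact add_mem (j_apply_mem_orthogonal hanti hcentral hj hW _)
      (zᗮ.smul_mem _ (j_apply_mem_orthogonal hanti hcentral hj hZ₁ _))
  exact ⟨hinj, (LinearMap.injOn_iff_surjOn hmaps).mp
    (LinearMap.disjoint_ker_iff_injOn.mp (LinearMap.disjoint_ker.mpr hinj))⟩

/-- Let `h = v ⊕ z` be an H-type Lie algebra, `Z₁ ∈ z` a unit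
vector, `v = v₁ ⊕ v₂` an orthogonal decomposition into `j_{Z₁}`-invariant
subspaces, and `r > 0`.  The modified maps
`j̃_{Z+λZ₁}(V₁+V₂) = j_{Z+λZ₁}(V₁+V₂) + (r−1) j_{λZ₁} V₂` (for `Z ⊥ Z₁`)
are all invertible on `v` for nonzero central elements; i.e. the modified
2-step nilpotent Lie algebra `n_r` is non-singular. -/
theorem stmt_19 {n : Type*} [NormedAddCommGroup n] [InnerProductSpace ℝ n]
    [FiniteDimensional ℝ n]
    (B : n →ₗ[ℝ] n →ₗ[ℝ] n)
    (hanti : ∀ X Y, B X Y = - B Y X)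
    (h2step : ∀ X Y W, B (B X Y) W = 0)
    (z : Submodule ℝ n) (hz : ∀ X, X ∈ z ↔ ∀ Y, B X Y = 0)
    (j : n → n →ₗ[ℝ] n)
    (hj : ∀ Z ∈ z, ∀ X Y : n, ⟪j Z X, Y⟫ = ⟪Z, B X Y⟫)
    (hH : ∀ Z ∈ z, ∀ V ∈ zᗮ, j Z (j Z V) = - (‖Z‖ ^ 2 • V))
    (Z₁ : n) (hZ₁ : Z₁ ∈ z) (hZ₁norm : ‖Z₁‖ = 1)
    (v₁ v₂ : Submodule ℝ n)
    (hv₁ : v₁ ≤ zᗮ) (hv₂ : v₂ ≤ zᗮ)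
    (horth : ∀ a ∈ v₁, ∀ b ∈ v₂, ⟪a, b⟫ = 0)
    (hsup : v₁ ⊔ v₂ = zᗮ)
    (hinv₁ : ∀ V ∈ v₁, j Z₁ V ∈ v₁) (hinv₂ : ∀ V ∈ v₂, j Z₁ V ∈ v₂)
    (r : ℝ) (hr : 0 < r)
    (jt : n → n →ₗ[ℝ] n)
    (hjt : ∀ Z ∈ z, ⟪Z, Z₁⟫ = 0 → ∀ lam : ℝ, ∀ V₁ ∈ v₁, ∀ V₂ ∈ v₂,
      jt (Z + lam • Z₁) (V₁ + V₂) =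
        j (Z + lam • Z₁) (V₁ + V₂) + (r - 1) • j (lam • Z₁) V₂) :
    ∀ W ∈ z, W ≠ 0 →
      (∀ V ∈ zᗮ, jt W V = 0 → V = 0) ∧ (∀ X ∈ zᗮ, ∃ V ∈ zᗮ, jt W V = X) :=
  stmt_19_general B hanti z hz j hj hH Z₁ hZ₁ hZ₁norm v₁ v₂ horth hsup r hr jt hjt
end
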